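/- arXiv:0910.5667 — 7 statements merged into one kernel-verified Lean document; each statement's English description precedes it below -/
import Mathlib

section
/- Let p be an odd prime and let a be a positive integer. Then, in the ring ℤ_p of p-adic integers, ∑_{k=0}^{p^a−1} C(p^a − 1, k) · C(2k, k) / (−2)^k ≡ (−1)^{(p^a−1)/2} · 2^{p−1} (mod p^2), where 1/(−2)^k denotes the inverse of (−2)^k in ℤ_p. -/
/-!
The polynomial identity `-(1 + X)² / 2 + X = -(1 + X²) / 2`, read off at the coefficient of
`X^n` in the `n`-th powers, turns the sum into `C(2m, m) / 4^m` with `2m = p^a - 1`.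
Modulo `p²`, the signed binomial coefficients `(-1)^k C(p^a - 1, k)` are those of `p - 1`, each
repeated `p^(a-1)` times: going from `k` to `k + 1` multiplies by `1 - p^a / (k + 1)`, which is
`≡ 1` unless `p^(a-1) ∣ k + 1`, and is then the factor `1 - p / s` of the recursion for `p - 1`.
Finally `(-1)^h C(p - 1, h) ≡ 1 - p H_h ≡ 4^(p-1)` for `h = (p - 1) / 2` (Morley's congruence
modulo `p²`), because `2^(p-1) = ∑ C(p - 1, k) ≡ ∑ (-1)^k (1 - p H_k) = 1 - p H_h / 2`;
and `2^(p^a - 1) ≡ 2^(p-1)` by Euler's theorem modulo `p²`.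
-/

open Finset Polynomial

theorem sum_choose_mul_choose_two_mul_mul_pow {R : Type*} [CommRing R] {x : R}
    (hx : 2 * x + 1 = 0) (m : ℕ) :
    ∑ k ∈ range (2 * m + 1), ((2 * m).choose k : R) * ((2 * k).choose k : R) * x ^ k =
      ((2 * m).choose m : R) * x ^ (2 * m) := by
  set n := 2 * m
  have hpoly : C x * (1 + X) ^ 2 + X = C x * expand R 2 (1 + X) := by
    have : C x * (1 + X) ^ 2 + X = C x * (1 + X ^ 2) + C (2 * x + 1) * X := by
      simp only [map_add, map_mul, map_ofNat, map_one]; ring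
    rw [this, hx, map_zero, zero_mul, add_zero, map_add, map_one, expand_X]
  have hlhs : ((C x * (1 + X) ^ 2 + X) ^ n).coeff n =
      ∑ k ∈ range (n + 1), (n.choose k : R) * ((2 * k).choose k : R) * x ^ k := by
    rw [add_pow, finsetSum_coeff]
    refine sum_congr rfl fun k hk => ?_
    have hkn : k ≤ n := Nat.lt_succ_iff.mp (mem_range.mp hk)
    have : (C x * (1 + X) ^ 2) ^ k * X ^ (n - k) * (n.choose k : R[X]) =
        C (x ^ k * n.choose k) * ((1 + X) ^ (2 * k) * X ^ (n - k)) := by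
      simp only [← C_eq_natCast, C_mul, mul_pow, ← C_pow, ← pow_mul]
      ring
    rw [this, coeff_C_mul, coeff_mul_X_pow', if_pos (Nat.sub_le n k), Nat.sub_sub_self hkn,
      coeff_one_add_X_pow]
    ring
  have hrhs : ((C x * expand R 2 (1 + X)) ^ n).coeff n = (n.choose m : R) * x ^ n := by
    rw [mul_pow, ← C_pow, ← map_pow, coeff_C_mul, coeff_expand two_pos,
      if_pos (dvd_mul_right 2 m), Nat.mul_div_cancel_left m two_pos, coeff_one_add_X_pow, mul_comm]
  rw [← hlhs, hpoly, hrhs]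

theorem neg_one_pow_mul_choose_pred_succ_mul {R : Type*} [CommRing R] {N : ℕ} (hN : 0 < N)
    (k : ℕ) :
    (-1 : R) ^ (k + 1) * ((N - 1).choose (k + 1) : R) * (k + 1) =
      (-1) ^ k * ((N - 1).choose k : R) * (k + 1 - N) := by
  rcases le_or_gt k (N - 1) with hkN | hNk
  · have h := congrArg (Nat.cast : ℕ → R) (Nat.choose_succ_right_eq (N - 1) k)
    push_cast [hkN, Nat.one_le_iff_ne_zero.mpr hN.ne'] at h
    linear_combination (-(-1 : R) ^ k) * h
  · simp [Nat.choose_eq_zero_of_lt hNk, Nat.choose_eq_zero_of_lt (Nat.lt_succ_of_lt hNk)]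

theorem sum_range_neg_one_pow_mul_one_sub_mul_sum {R : Type*} [CommRing R] (c : R) (f : ℕ → R)
    (n : ℕ) :
    ∑ k ∈ range (2 * n + 1), (-1) ^ k * (1 - c * ∑ j ∈ range k, f j) =
      1 - c * ∑ i ∈ range n, f (2 * i + 1) := by
  induction n with
  | zero => simp
  | succ n ih =>
    have hodd : (-1 : R) ^ (2 * n + 1) = -1 := by simp [pow_succ, pow_mul]
    rw [show 2 * (n + 1) + 1 = 2 * n + 1 + 1 + 1 by ring, sum_range_succ, sum_range_succ, ih,
      sum_range_succ (fun i => f (2 * i + 1)), sum_range_succ f (2 * n + 1),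
      pow_succ _ (2 * n + 1), hodd]
    ring

theorem Prime.pow_dvd_of_pow_add_dvd_mul {M : Type*} [CommMonoidWithZero M] [IsCancelMulZero M]
    {p x j : M} (hp : Prime p) {c : ℕ} (n : ℕ) (hj : ¬p ^ (c + 1) ∣ j)
    (h : p ^ (c + n) ∣ x * j) : p ^ n ∣ x := by
  induction c generalizing j with
  | zero => exact hp.pow_dvd_of_dvd_mul_right n (by simpa using hj) (by simpa using h)
  | succ c ih =>
    by_cases hpj : p ∣ j
    · obtain ⟨j, rfl⟩ := hpj
      refine ih (j := j) (fun hc => hj ?_) ?_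
      · rw [pow_succ']; exact mul_dvd_mul_left p hc
      · rw [add_right_comm, pow_succ', mul_left_comm] at h
        exact (mul_dvd_mul_iff_left hp.ne_zero).mp h
    · exact hp.pow_dvd_of_dvd_mul_right n hpj ((pow_dvd_pow p (by omega)).trans h)

theorem ZMod.natCast_sq_eq_zero (p : ℕ) : (p : ZMod (p ^ 2)) ^ 2 = 0 := by
  exact_mod_cast ZMod.natCast_self (p ^ 2)

theorem Nat.pow_succ_sub_one_div_two_div_pow {p : ℕ} (hodd : Odd p) (c : ℕ) :
    (p ^ (c + 1) - 1) / 2 / p ^ c = (p - 1) / 2 := by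
  obtain ⟨t, ht⟩ := hodd.pow (n := c)
  obtain ⟨h, rfl⟩ := hodd
  rw [Nat.div_div_eq_div_mul, pow_succ, ht,
    show (2 * t + 1) * (2 * h + 1) - 1 = 2 * (2 * t * h + t + h) by ring_nf; omega,
    Nat.mul_div_mul_left _ _ two_pos, Nat.add_sub_cancel, Nat.mul_div_cancel_left h two_pos]
  exact Nat.div_eq_of_lt_le (by ring_nf; omega) (by ring_nf; omega)

section PrimeModulus

variable {p : ℕ} [hp : Fact p.Prime]

theorem neg_one_pow_mul_choose_prime_pow_sub_one_succ_modEq {d k : ℕ}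
    (hk : ¬p ^ (d + 1) ∣ k + 1) :
    (-1) ^ (k + 1) * ((p ^ (d + 2) - 1).choose (k + 1) : ℤ) ≡
      (-1) ^ k * ((p ^ (d + 2) - 1).choose k : ℤ) [ZMOD p ^ 2] := by
  have hA := neg_one_pow_mul_choose_pred_succ_mul (R := ℤ) (pow_pos hp.out.pos (d + 2)) k
  rw [Int.modEq_iff_dvd]
  refine (Nat.prime_iff_prime_int.mp hp.out).pow_dvd_of_pow_add_dvd_mul 2
    (j := ((k + 1 : ℕ) : ℤ)) (by exact_mod_cast hk)
    ⟨(-1) ^ k * ((p ^ (d + 2) - 1).choose k), ?_⟩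
  push_cast at hA ⊢
  linear_combination -hA

theorem neg_one_pow_mul_choose_prime_pow_sub_one_succ_mul {c k s : ℕ}
    (hks : k + 1 = p ^ c * (s + 1)) :
    (-1) ^ (k + 1) * ((p ^ (c + 1) - 1).choose (k + 1) : ℤ) * (s + 1) =
      (-1) ^ k * ((p ^ (c + 1) - 1).choose k : ℤ) * (s + 1 - p) := by
  have hA := neg_one_pow_mul_choose_pred_succ_mul (R := ℤ) (pow_pos hp.out.pos (c + 1)) k
  have hks : (k + 1 : ℤ) = p ^ c * (s + 1) := by exact_mod_cast hks
  refine mul_left_cancel₀ (pow_ne_zero c (Nat.cast_ne_zero.mpr hp.out.ne_zero)) ?_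
  push_cast at hA
  linear_combination hA + ((-1) ^ k * ((p ^ (c + 1) - 1).choose k : ℤ) -
    (-1) ^ (k + 1) * ((p ^ (c + 1) - 1).choose (k + 1) : ℤ)) * hks

theorem neg_one_pow_mul_choose_prime_pow_sub_one_modEq (c : ℕ) {k : ℕ}
    (hk : k < p ^ (c + 1)) :
    (-1) ^ k * ((p ^ (c + 1) - 1).choose k : ℤ) ≡
      (-1) ^ (k / p ^ c) * ((p - 1).choose (k / p ^ c) : ℤ) [ZMOD p ^ 2] := by
  induction k with
  | zero => simp
  | succ k ih =>
    specialize ih (by omega)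
    by_cases hdvd : p ^ c ∣ k + 1
    · set s := k / p ^ c
      have hs : (k + 1) / p ^ c = s + 1 := Nat.succ_div_of_dvd hdvd
      have hks : k + 1 = p ^ c * (s + 1) := by rw [← hs, Nat.mul_div_cancel' hdvd]
      have hsp : ¬(p : ℤ) ∣ (s + 1 : ℕ) := by
        rw [Int.natCast_dvd_natCast]
        refine Nat.not_dvd_of_pos_of_lt s.succ_pos (Nat.lt_of_mul_lt_mul_left (a := p ^ c) ?_)
        rwa [← hks, ← pow_succ]
      have hA := neg_one_pow_mul_choose_prime_pow_sub_one_succ_mul hks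
      have hB := neg_one_pow_mul_choose_pred_succ_mul (R := ℤ) hp.out.pos s
      rw [hs, Int.modEq_iff_dvd]
      refine (Nat.prime_iff_prime_int.mp hp.out).pow_dvd_of_dvd_mul_right 2 hsp ?_
      rw [show ((-1) ^ (s + 1) * ((p - 1).choose (s + 1) : ℤ) -
          (-1) ^ (k + 1) * ((p ^ (c + 1) - 1).choose (k + 1) : ℤ)) * (s + 1 : ℕ) =
          ((-1) ^ s * ((p - 1).choose s : ℤ) - (-1) ^ k * ((p ^ (c + 1) - 1).choose k : ℤ)) *
            (s + 1 - p) by push_cast; linear_combination hB - hA]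
      exact ih.dvd.mul_right _
    · obtain ⟨d, rfl⟩ : ∃ d, c = d + 1 :=
        Nat.exists_eq_succ_of_ne_zero (by rintro rfl; exact hdvd (one_dvd _))
      rw [Nat.succ_div_of_not_dvd hdvd]
      exact (neg_one_pow_mul_choose_prime_pow_sub_one_succ_modEq hdvd).trans ih

theorem ZMod.natCast_mul_inv_eq_one_of_lt {j : ℕ} (hj : 0 < j) (hjp : j < p) :
    (j : ZMod (p ^ 2)) * (j : ZMod (p ^ 2))⁻¹ = 1 :=
  ZMod.coe_mul_inv_eq_one j ((Nat.coprime_of_lt_prime hj.ne' hjp hp.out).symm.pow_right 2)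

theorem neg_one_pow_mul_choose_prime_sub_one {k : ℕ} (hk : k < p) :
    (-1) ^ k * ((p - 1).choose k : ZMod (p ^ 2)) =
      1 - p * ∑ j ∈ range k, ((j + 1 : ℕ) : ZMod (p ^ 2))⁻¹ := by
  induction k with
  | zero => simp
  | succ k ih =>
    have hA := neg_one_pow_mul_choose_pred_succ_mul (R := ZMod (p ^ 2)) hp.out.pos k
    have hu := ZMod.natCast_mul_inv_eq_one_of_lt (p := p) k.succ_pos hk
    rw [sum_range_succ, Nat.cast_succ]
    rw [Nat.cast_succ] at hu
    set u := ((k : ZMod (p ^ 2)) + 1)⁻¹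
    set H := ∑ j ∈ range k, ((j + 1 : ℕ) : ZMod (p ^ 2))⁻¹
    set A := (-1) ^ (k + 1) * ((p - 1).choose (k + 1) : ZMod (p ^ 2))
    linear_combination u * hA + (k + 1 - p) * u * ih (by omega) + (1 - p * H - A) * hu +
      u * H * ZMod.natCast_sq_eq_zero p

theorem two_pow_prime_sub_one_eq_one_sub_mul_sum (hodd : Odd p) :
    (2 : ZMod (p ^ 2)) ^ (p - 1) =
      1 - p * ∑ i ∈ range ((p - 1) / 2), ((2 * i + 2 : ℕ) : ZMod (p ^ 2))⁻¹ := by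
  obtain ⟨h, hh⟩ := hodd
  have hsum : ∑ k ∈ range p, ((p - 1).choose k : ZMod (p ^ 2)) = 2 ^ (p - 1) := by
    have := congrArg (Nat.cast : ℕ → ZMod (p ^ 2)) (Nat.sum_range_choose (p - 1))
    push_cast at this
    rwa [Nat.sub_add_cancel hp.out.one_le] at this
  rw [← hsum]
  calc ∑ k ∈ range p, ((p - 1).choose k : ZMod (p ^ 2))
      = ∑ k ∈ range (2 * h + 1),
          (-1) ^ k * (1 - p * ∑ j ∈ range k, ((j + 1 : ℕ) : ZMod (p ^ 2))⁻¹) := by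
        rw [← hh]
        refine sum_congr rfl fun k hk => ?_
        rw [← neg_one_pow_mul_choose_prime_sub_one (mem_range.mp hk), ← mul_assoc, ← pow_add,
          ← two_mul, pow_mul, neg_one_sq, one_pow, one_mul]
    _ = _ := by
        rw [sum_range_neg_one_pow_mul_one_sub_mul_sum, hh, Nat.add_sub_cancel,
          Nat.mul_div_cancel_left h two_pos]

theorem neg_one_pow_mul_choose_prime_sub_one_div_two (hodd : Odd p) :
    (-1) ^ ((p - 1) / 2) * ((p - 1).choose ((p - 1) / 2) : ZMod (p ^ 2)) = 4 ^ (p - 1) := by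
  have hterm : ∀ i ∈ range ((p - 1) / 2),
      ((i + 1 : ℕ) : ZMod (p ^ 2))⁻¹ = 2 * ((2 * i + 2 : ℕ) : ZMod (p ^ 2))⁻¹ := by
    intro i hi
    refine ZMod.inv_eq_of_mul_eq_one _ _ _ ?_
    have := ZMod.natCast_mul_inv_eq_one_of_lt (p := p) (j := 2 * i + 2) (by omega)
      (by have := mem_range.mp hi; omega)
    push_cast at this ⊢
    linear_combination this
  rw [neg_one_pow_mul_choose_prime_sub_one (by have := hp.out.pos; omega), sum_congr rfl hterm,
    ← mul_sum, show (4 : ZMod (p ^ 2)) ^ (p - 1) = (2 ^ (p - 1)) ^ 2 by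
      rw [← pow_mul, mul_comm, pow_mul]; norm_num, two_pow_prime_sub_one_eq_one_sub_mul_sum hodd]
  set E := ∑ i ∈ range ((p - 1) / 2), ((2 * i + 2 : ℕ) : ZMod (p ^ 2))⁻¹
  linear_combination -E ^ 2 * ZMod.natCast_sq_eq_zero p

theorem ZMod.units_pow_prime_pow_sub_one (x : (ZMod (p ^ 2))ˣ) {a : ℕ} (ha : 0 < a) :
    x ^ (p ^ a - 1) = x ^ (p - 1) := by
  obtain ⟨t, ht⟩ := Nat.sub_one_dvd_pow_sub_one p (a - 1)
  have hexp : p ^ a - 1 = (p - 1) + p * (p - 1) * t := by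
    have h1 : 1 ≤ p ^ (a - 1) := Nat.one_le_pow _ _ hp.out.pos
    have h2 : p ^ a = p * p ^ (a - 1) := by rw [← pow_succ', Nat.sub_add_cancel ha]
    have h3 : p * p ^ (a - 1) = p * (p - 1) * t + p := by
      rw [mul_assoc, ← ht, Nat.mul_sub_one, Nat.sub_add_cancel (Nat.le_mul_of_pos_right p h1)]
    have := hp.out.one_le
    omega
  have htot : x ^ (p * (p - 1)) = 1 := by
    simpa [Nat.totient_prime_pow_succ hp.out 1] using ZMod.pow_totient x
  rw [hexp, pow_add, pow_mul, htot, one_pow, mul_one]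

theorem choose_prime_pow_sub_one_div_two (hodd : Odd p) {a : ℕ} (ha : 0 < a) :
    ((p ^ a - 1).choose ((p ^ a - 1) / 2) : ZMod (p ^ 2)) =
      2 ^ (p ^ a - 1) * ((-1) ^ ((p ^ a - 1) / 2) * 2 ^ (p - 1)) := by
  obtain ⟨c, rfl⟩ : ∃ c, a = c + 1 := Nat.exists_eq_succ_of_ne_zero ha.ne'
  set m := (p ^ (c + 1) - 1) / 2
  have hsigned : (-1) ^ m * ((p ^ (c + 1) - 1).choose m : ZMod (p ^ 2)) = 4 ^ (p - 1) := by
    have hm : m < p ^ (c + 1) := by have := Nat.one_le_pow (c + 1) p hp.out.pos; omega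
    have := (ZMod.intCast_eq_intCast_iff _ _ (p ^ 2)).mpr
      (by exact_mod_cast neg_one_pow_mul_choose_prime_pow_sub_one_modEq c hm)
    push_cast at this
    rwa [Nat.pow_succ_sub_one_div_two_div_pow hodd,
      neg_one_pow_mul_choose_prime_sub_one_div_two hodd] at this
  have htwo := congrArg Units.val <| ZMod.units_pow_prime_pow_sub_one
    (ZMod.unitOfCoprime 2 ((Nat.coprime_two_left.mpr hodd).pow_right 2)) ha
  push_cast [ZMod.coe_unitOfCoprime] at htwo
  have hfour : (4 : ZMod (p ^ 2)) ^ (p - 1) = 2 ^ (p - 1) * 2 ^ (p - 1) := by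
    rw [← mul_pow]; norm_num
  have hsq : ((-1 : ZMod (p ^ 2)) ^ m) ^ 2 = 1 := by rw [← pow_mul, mul_comm, pow_mul]; simp
  rw [htwo]
  linear_combination (-1) ^ m * hsigned + (-1) ^ m * hfour -
    ((p ^ (c + 1) - 1).choose m : ZMod (p ^ 2)) * hsq

theorem Padic.norm_intCast_div_two_pow_sub_le (hodd : Odd p) {x y : ℤ} {n k : ℕ}
    (h : x ≡ 2 ^ n * y [ZMOD p ^ k]) :
    ‖(x : ℚ_[p]) / 2 ^ n - y‖ ≤ (p : ℝ) ^ (-k : ℤ) := by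
  have htwo : ‖(2 : ℚ_[p])‖ = 1 := by
    rw [← Nat.cast_ofNat, Padic.norm_natCast_eq_one_iff.mpr (Nat.coprime_two_left.mpr hodd).symm]
  calc ‖(x : ℚ_[p]) / 2 ^ n - y‖ = ‖((x - 2 ^ n * y : ℤ) : ℚ_[p])‖ := by
        rw [show (x : ℚ_[p]) / 2 ^ n - y = ((x - 2 ^ n * y : ℤ) : ℚ_[p]) / 2 ^ n by
          push_cast; field_simp, norm_div, norm_pow, htwo, one_pow, div_one]
    _ ≤ _ := (Padic.norm_int_le_pow_iff_dvd _ k).mpr h.symm.dvd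

end PrimeModulus

theorem sum_binom_central_neg_two_pow_mod_p_sq (p : ℕ) [Fact p.Prime] (hp : Odd p)
    (a : ℕ) (ha : 0 < a) :
    ‖(∑ k ∈ Finset.range (p ^ a),
        ((p ^ a - 1).choose k : ℚ_[p]) * ((2 * k).choose k : ℚ_[p]) / (-2 : ℚ_[p]) ^ k) -
      (-1 : ℚ_[p]) ^ ((p ^ a - 1) / 2) * (2 : ℚ_[p]) ^ (p - 1)‖ ≤ (p : ℝ) ^ (-2 : ℤ) := by
  obtain ⟨m, hm⟩ : ∃ m, p ^ a = 2 * m + 1 := hp.pow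
  have hcongr :
      ((2 * m).choose m : ℤ) ≡ 2 ^ (2 * m) * ((-1) ^ m * 2 ^ (p - 1)) [ZMOD p ^ 2] := by
    have := choose_prime_pow_sub_one_div_two hp ha
    rw [hm, Nat.add_sub_cancel, Nat.mul_div_cancel_left m two_pos] at this
    exact_mod_cast (ZMod.intCast_eq_intCast_iff _ _ (p ^ 2)).mp (by push_cast; exact this)
  have hsum := sum_choose_mul_choose_two_mul_mul_pow (x := (-2 : ℚ_[p])⁻¹) (by norm_num) m
  simp only [inv_pow, ← div_eq_mul_inv, (even_two_mul m).neg_pow] at hsum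
  rw [hm, Nat.add_sub_cancel, Nat.mul_div_cancel_left m two_pos, hsum]
  have := Padic.norm_intCast_div_two_pow_sub_le hp hcongr
  push_cast at this
  exact this
end

section
/- For every integer m and every positive integer n, the following identity holds: ∑_{k=0}^{n−1} C(n−1, k) · C(2k, k) · (−1)^k · m^{n−1−k} = ∑_{k=0}^{⌊(n−1)/2⌋} C(n−1, k) · C(n−1−k, k) · (m−2)^{n−1−2k}. -/
/-! Both sides are the coefficient of `X ^ (n - 1)` in `(X ^ 2 + (m - 2) X + 1) ^ (n - 1)`:
the left side comes from writing the trinomial as `(X - 1) ^ 2 + m X`, the right side from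
writing it as `1 + X (X + (m - 2))`, and in each case expanding by the binomial theorem. -/

open Polynomial Finset

namespace Polynomial

variable {R : Type*}

theorem coeff_X_sub_one_sq_add_C_mul_X_pow_self [CommRing R] (m : R) (N : ℕ) :
    (((X - 1) ^ 2 + C m * X) ^ N).coeff N =
      ∑ k ∈ range (N + 1), (N.choose k : R) * ((2 * k).choose k : R) * (-1) ^ k * m ^ (N - k) := by
  rw [add_pow, finsetSum_coeff]
  refine sum_congr rfl fun k hk => ?_
  have hkN : k ≤ N := Nat.lt_succ_iff.mp (mem_range.mp hk)
  have hterm : ((X - 1) ^ 2) ^ k * (C m * X) ^ (N - k) * (N.choose k : R[X]) =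
      C (m ^ (N - k) * N.choose k) * (X ^ (N - k) * (X + C (-1)) ^ (2 * k)) := by
    simp only [C_mul, C_pow, map_natCast, map_neg, map_one, ← sub_eq_add_neg, ← pow_mul]
    ring
  rw [hterm, coeff_C_mul, coeff_X_pow_mul', if_pos (Nat.sub_le N k), Nat.sub_sub_self hkN,
    coeff_X_add_C_pow, show 2 * k - k = k by omega]
  ring

theorem coeff_X_sq_add_C_mul_X_add_one_pow_self [CommSemiring R] (a : R) (N : ℕ) :
    ((X ^ 2 + C a * X + 1) ^ N).coeff N =
      ∑ k ∈ range (N / 2 + 1), (N.choose k : R) * ((N - k).choose k : R) * a ^ (N - 2 * k) := by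
  have hsplit : (X ^ 2 + C a * X + 1 : R[X]) = 1 + X * (X + C a) := by ring
  have hcoeff (k : ℕ) (hk : k ∈ range (N + 1)) :
      (1 ^ k * (X * (X + C a)) ^ (N - k) * (N.choose k : R[X])).coeff N =
        (N.choose k : R) * ((N - k).choose k : R) * a ^ (N - 2 * k) := by
    have hkN : k ≤ N := Nat.lt_succ_iff.mp (mem_range.mp hk)
    rw [one_pow, one_mul, coeff_mul_natCast, mul_pow, coeff_X_pow_mul', if_pos (Nat.sub_le N k),
      Nat.sub_sub_self hkN, coeff_X_add_C_pow, show N - k - k = N - 2 * k by omega]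
    ring
  rw [hsplit, add_pow, finsetSum_coeff, sum_congr rfl hcoeff]
  refine (sum_subset (range_subset_range.mpr (by omega)) fun k _ hk => ?_).symm
  have hlt : N - k < k := by simp only [mem_range] at hk; omega
  rw [Nat.choose_eq_zero_of_lt hlt, Nat.cast_zero, mul_zero, zero_mul]

end Polynomial

theorem sum_binom_central_eq_sum_trinomial (m : ℤ) (n : ℕ) (hn : 0 < n) :
    (∑ k ∈ Finset.range n,
        ((n - 1).choose k : ℤ) * ((2 * k).choose k : ℤ) * (-1) ^ k * m ^ (n - 1 - k)) =
      ∑ k ∈ Finset.range ((n - 1) / 2 + 1),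
        ((n - 1).choose k : ℤ) * ((n - 1 - k).choose k : ℤ) * (m - 2) ^ (n - 1 - 2 * k) := by
  have htrinomial : ((X - 1) ^ 2 + C m * X : ℤ[X]) = X ^ 2 + C (m - 2) * X + 1 := by
    rw [C_sub, C_ofNat]
    ring
  rw [← coeff_X_sq_add_C_mul_X_add_one_pow_self, ← htrinomial,
    coeff_X_sub_one_sq_add_C_mul_X_pow_self, Nat.sub_add_cancel hn]
end

section
/- Let p be an odd prime, let a be a positive integer, and let m be an integer with p ∤ m and p | m − 4. Then, in the ring ℤ_p of p-adic integers, ∑_{k=1}^{p^a−1} p^{a−1}·H_k · C(2k, k) / m^k ≡ 2·δ_{a,1} (mod p), where H_k = ∑_{j=1}^{k} 1/j is the k-th harmonic number (so that p^{a−1}·H_k ∈ ℤ_p for 1 ≤ k ≤ p^a − 1), 1/m^k denotes the inverse of m^k in ℤ_p, and δ_{a,1} equals 1 if a = 1 and 0 otherwise. -/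
/-!
Over any field of characteristic zero, induction on `n` gives
`∑_{k=1}^n H_k C(2k,k)/4^k = (2n+1) C(2n,n)/4^n (H_n - 2) + 2`,
and `(2n+1) C(2n,n) = (n+1) C(2n+1,n+1)`.
For `n = p^a - 1` the factor `n + 1 = p^a` makes the first term vanish mod `p` after multiplying by
`p^(a-1)`, because `p^(a-1) H_n` is `p`-integral; what remains is `2 p^(a-1) ≡ 2 δ_{a,1}`.
Since the coefficients `p^(a-1) H_k C(2k,k)` are `p`-integral and `m ≡ 4` is a unit mod `p`,
replacing `4^k` by `m^k` changes the sum only by a multiple of `p`.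
-/

open Finset

theorem sum_Icc_harmonic_mul_choose_div_four_pow (K : Type*) [Field K] [CharZero K] (n : ℕ) :
    ∑ k ∈ Icc 1 n, (∑ j ∈ Icc 1 k, (1 : K) / j) * ((2 * k).choose k : K) / 4 ^ k =
      (2 * n + 1) * ((2 * n).choose n : K) / 4 ^ n * ((∑ j ∈ Icc 1 n, (1 : K) / j) - 2) + 2 := by
  induction n with
  | zero => simp
  | succ n ih =>
    rw [sum_Icc_succ_top (by omega), ih, sum_Icc_succ_top (by omega)]
    have hn : (n + 1 : K) ≠ 0 := Nat.cast_add_one_ne_zero n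
    have hchoose : ((2 * (n + 1)).choose (n + 1) : K) =
        2 * (2 * n + 1) * ((2 * n).choose n : K) / (n + 1) := by
      rw [eq_div_iff hn, mul_comm]
      exact_mod_cast Nat.succ_mul_centralBinom_succ n
    rw [hchoose]
    push_cast
    field_simp
    ring

theorem sum_Icc_harmonic_mul_choose_div_four_pow_eq_succ_mul (K : Type*) [Field K] [CharZero K]
    (n : ℕ) :
    ∑ k ∈ Icc 1 n, (∑ j ∈ Icc 1 k, (1 : K) / j) * ((2 * k).choose k : K) / 4 ^ k =
      (n + 1) * ((2 * n + 1).choose (n + 1) / 4 ^ n) * ((∑ j ∈ Icc 1 n, (1 : K) / j) - 2) + 2 := by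
  have hchoose : (2 * n + 1 : K) * (2 * n).choose n = (n + 1) * (2 * n + 1).choose (n + 1) := by
    exact_mod_cast (Nat.add_one_mul_choose_eq (2 * n) n).trans (mul_comm _ _)
  rw [sum_Icc_harmonic_mul_choose_div_four_pow, hchoose]
  ring

namespace Padic

variable {p : ℕ} [Fact p.Prime]

theorem norm_intCast_eq_one_of_not_dvd {z : ℤ} (hz : ¬(p : ℤ) ∣ z) : ‖(z : ℚ_[p])‖ = 1 :=
  (norm_int_le_one z).antisymm (not_lt.mp (mt norm_intCast_lt_one_iff.mp hz))

theorem norm_natCast_le_one (n : ℕ) : ‖(n : ℚ_[p])‖ ≤ 1 := by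
  exact_mod_cast norm_int_le_one n

theorem norm_p_pow_le_inv {a : ℕ} (ha : 0 < a) : ‖(p : ℚ_[p]) ^ a‖ ≤ (p : ℝ) ^ (-1 : ℤ) := by
  rw [norm_p_pow]
  exact zpow_le_zpow_right₀ (mod_cast (Fact.out : p.Prime).one_le) (by omega)

theorem norm_p_pow_pred_div_natCast_le_one {a j : ℕ} (hj0 : j ≠ 0) (hj : j < p ^ a) :
    ‖(p : ℚ_[p]) ^ (a - 1) / j‖ ≤ 1 := by
  have hp := (Fact.out : p.Prime)
  have hv : padicValNat p j < a := (Nat.pow_lt_pow_iff_right hp.one_lt).mp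
    ((Nat.le_of_dvd (Nat.pos_of_ne_zero hj0) pow_padicValNat_dvd).trans_lt hj)
  rw [norm_div, norm_p_pow, norm_eq_zpow_neg_valuation (Nat.cast_ne_zero.mpr hj0),
    valuation_natCast, div_le_one (zpow_pos (mod_cast hp.pos) _)]
  exact zpow_le_zpow_right₀ (mod_cast hp.one_le) (by omega)

theorem norm_p_pow_pred_mul_harmonic_le_one {a k : ℕ} (hk : k < p ^ a) :
    ‖(p : ℚ_[p]) ^ (a - 1) * ∑ j ∈ Icc 1 k, (1 : ℚ_[p]) / j‖ ≤ 1 := by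
  rw [mul_sum]
  refine IsUltrametricDist.norm_sum_le_of_forall_le_of_nonneg zero_le_one fun j hj => ?_
  rw [mem_Icc] at hj
  rw [mul_one_div]
  exact norm_p_pow_pred_div_natCast_le_one (by omega) (by omega)

theorem norm_one_div_pow_sub_one_div_pow_le {m n : ℤ} (hm : ¬(p : ℤ) ∣ m) (hmn : (p : ℤ) ∣ m - n)
    (k : ℕ) : ‖1 / (m : ℚ_[p]) ^ k - 1 / (n : ℚ_[p]) ^ k‖ ≤ (p : ℝ) ^ (-1 : ℤ) := by
  have hn : ¬(p : ℤ) ∣ n := fun h => hm (by simpa using dvd_add hmn h)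
  have hm1 := norm_intCast_eq_one_of_not_dvd hm
  have hn1 := norm_intCast_eq_one_of_not_dvd hn
  have hm0 : (m : ℚ_[p]) ≠ 0 := norm_ne_zero_iff.mp (by simp [hm1])
  have hn0 : (n : ℚ_[p]) ≠ 0 := norm_ne_zero_iff.mp (by simp [hn1])
  have hdvd : (p : ℤ) ∣ n ^ k - m ^ k := dvd_sub_comm.mp (hmn.trans (sub_dvd_pow_sub_pow m n k))
  have heq : 1 / (m : ℚ_[p]) ^ k - 1 / (n : ℚ_[p]) ^ k =
      ((n ^ k - m ^ k : ℤ) : ℚ_[p]) / ((m : ℚ_[p]) ^ k * (n : ℚ_[p]) ^ k) := by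
    push_cast
    field_simp
  rw [heq, norm_div, norm_mul, norm_pow, norm_pow, hm1, hn1, one_pow, mul_one, div_one]
  exact_mod_cast (norm_int_le_pow_iff_dvd _ 1).mpr (by rwa [pow_one])

theorem norm_sum_div_pow_sub_sum_div_pow_le (s : Finset ℕ) (c : ℕ → ℚ_[p])
    (hc : ∀ k ∈ s, ‖c k‖ ≤ 1) {m n : ℤ} (hm : ¬(p : ℤ) ∣ m) (hmn : (p : ℤ) ∣ m - n) :
    ‖∑ k ∈ s, c k / (m : ℚ_[p]) ^ k - ∑ k ∈ s, c k / (n : ℚ_[p]) ^ k‖ ≤ (p : ℝ) ^ (-1 : ℤ) := by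
  rw [← sum_sub_distrib]
  refine IsUltrametricDist.norm_sum_le_of_forall_le_of_nonneg (by positivity) fun k hk => ?_
  calc ‖c k / (m : ℚ_[p]) ^ k - c k / (n : ℚ_[p]) ^ k‖
      = ‖c k‖ * ‖1 / (m : ℚ_[p]) ^ k - 1 / (n : ℚ_[p]) ^ k‖ := by rw [← norm_mul]; ring_nf
    _ ≤ 1 * (p : ℝ) ^ (-1 : ℤ) := by
      gcongr
      exacts [hc k hk, norm_one_div_pow_sub_one_div_pow_le hm hmn k]
    _ = (p : ℝ) ^ (-1 : ℤ) := one_mul _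

theorem norm_two_mul_p_pow_pred_sub_ite_le {a : ℕ} (ha : 0 < a) :
    ‖2 * (p : ℚ_[p]) ^ (a - 1) - 2 * (if a = 1 then 1 else 0)‖ ≤ (p : ℝ) ^ (-1 : ℤ) := by
  rcases eq_or_ne a 1 with rfl | ha1
  · simp
  · rw [if_neg ha1, mul_zero, sub_zero, norm_mul]
    calc ‖(2 : ℚ_[p])‖ * ‖(p : ℚ_[p]) ^ (a - 1)‖ ≤ 1 * (p : ℝ) ^ (-1 : ℤ) := by
          gcongr
          exacts [mod_cast norm_natCast_le_one 2, norm_p_pow_le_inv (by omega)]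
      _ = (p : ℝ) ^ (-1 : ℤ) := one_mul _

theorem norm_sum_p_pow_pred_mul_harmonic_mul_choose_div_four_pow_sub_le {a : ℕ} (ha : 0 < a)
    (h4 : ¬(p : ℤ) ∣ 4) :
    ‖(∑ k ∈ Icc 1 (p ^ a - 1), (p : ℚ_[p]) ^ (a - 1) * (∑ j ∈ Icc 1 k, (1 : ℚ_[p]) / j) *
        ((2 * k).choose k : ℚ_[p]) / 4 ^ k) - 2 * (if a = 1 then 1 else 0)‖ ≤
      (p : ℝ) ^ (-1 : ℤ) := by
  set n := p ^ a - 1 with hn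
  have hn_lt : n < p ^ a := Nat.sub_one_lt (pow_pos (Fact.out : p.Prime).pos a).ne'
  have hpa : (n : ℚ_[p]) + 1 = (p : ℚ_[p]) ^ a := by
    exact_mod_cast (by omega : n + 1 = p ^ a)
  have hsum : ∑ k ∈ Icc 1 n, (p : ℚ_[p]) ^ (a - 1) * (∑ j ∈ Icc 1 k, (1 : ℚ_[p]) / j) *
        ((2 * k).choose k : ℚ_[p]) / 4 ^ k =
      (p : ℚ_[p]) ^ (a - 1) * ((p : ℚ_[p]) ^ a * ((2 * n + 1).choose (n + 1) / 4 ^ n) *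
        ((∑ j ∈ Icc 1 n, (1 : ℚ_[p]) / j) - 2) + 2) := by
    rw [← hpa, ← sum_Icc_harmonic_mul_choose_div_four_pow_eq_succ_mul, mul_sum]
    exact sum_congr rfl fun k _ => by ring
  set H := ∑ j ∈ Icc 1 n, (1 : ℚ_[p]) / j
  set X : ℚ_[p] := (2 * n + 1).choose (n + 1) / 4 ^ n
  have hsplit : (∑ k ∈ Icc 1 n, (p : ℚ_[p]) ^ (a - 1) * (∑ j ∈ Icc 1 k, (1 : ℚ_[p]) / j) *
        ((2 * k).choose k : ℚ_[p]) / 4 ^ k) - 2 * (if a = 1 then 1 else 0) =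
      (p : ℚ_[p]) ^ a * X * ((p : ℚ_[p]) ^ (a - 1) * H + -(2 * (p : ℚ_[p]) ^ (a - 1))) +
        (2 * (p : ℚ_[p]) ^ (a - 1) - 2 * (if a = 1 then 1 else 0)) := by
    rw [hsum]
    ring
  have hH : ‖(p : ℚ_[p]) ^ (a - 1) * H + -(2 * (p : ℚ_[p]) ^ (a - 1))‖ ≤ 1 := by
    refine (IsUltrametricDist.norm_add_le_max _ _).trans (max_le ?_ ?_)
    · exact norm_p_pow_pred_mul_harmonic_le_one hn_lt
    · rw [norm_neg, norm_mul]
      exact mul_le_one₀ (mod_cast norm_natCast_le_one 2) (norm_nonneg _)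
        (mod_cast norm_natCast_le_one (p ^ (a - 1)))
  have hX : ‖X‖ ≤ 1 := by
    have h4' : ‖(4 : ℚ_[p])‖ = 1 := by exact_mod_cast norm_intCast_eq_one_of_not_dvd h4
    rw [norm_div, norm_pow, h4', one_pow, div_one]
    exact norm_natCast_le_one _
  rw [hsplit]
  refine (IsUltrametricDist.norm_add_le_max _ _).trans
    (max_le ?_ (norm_two_mul_p_pow_pred_sub_ite_le ha))
  calc _ ≤ (p : ℝ) ^ (-1 : ℤ) * 1 * 1 := by
        rw [norm_mul, norm_mul]
        gcongr
        exact norm_p_pow_le_inv ha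
    _ = (p : ℝ) ^ (-1 : ℤ) := by ring

end Padic

theorem sum_harmonic_central_mod_p_of_dvd_general (p : ℕ) [Fact p.Prime]
    (a : ℕ) (ha : 0 < a) (m : ℤ) (hm : ¬ (p : ℤ) ∣ m) (hm4 : (p : ℤ) ∣ m - 4) :
    ‖(∑ k ∈ Finset.Icc 1 (p ^ a - 1),
        (p : ℚ_[p]) ^ (a - 1) * (∑ j ∈ Finset.Icc 1 k, (1 : ℚ_[p]) / (j : ℚ_[p])) *
          ((2 * k).choose k : ℚ_[p]) / (m : ℚ_[p]) ^ k) -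
      2 * (if a = 1 then (1 : ℚ_[p]) else 0)‖ ≤ (p : ℝ) ^ (-1 : ℤ) := by
  have h4 : ¬(p : ℤ) ∣ 4 := fun h => hm (by simpa using dvd_add hm4 h)
  have hcoeff : ∀ k ∈ Icc 1 (p ^ a - 1), ‖(p : ℚ_[p]) ^ (a - 1) *
      (∑ j ∈ Icc 1 k, (1 : ℚ_[p]) / j) * ((2 * k).choose k : ℚ_[p])‖ ≤ 1 := fun k hk => by
    rw [norm_mul]
    exact mul_le_one₀ (Padic.norm_p_pow_pred_mul_harmonic_le_one (by grind)) (norm_nonneg _)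
      (Padic.norm_natCast_le_one _)
  have hreplace := Padic.norm_sum_div_pow_sub_sum_div_pow_le _ _ hcoeff hm hm4
  have hfour := Padic.norm_sum_p_pow_pred_mul_harmonic_mul_choose_div_four_pow_sub_le ha h4
  push_cast at hreplace
  rw [← dist_eq_norm] at hreplace hfour ⊢
  exact (dist_triangle_max _ _ _).trans (max_le hreplace hfour)

theorem sum_harmonic_central_mod_p_of_dvd (p : ℕ) [Fact p.Prime] (hp : Odd p)
    (a : ℕ) (ha : 0 < a) (m : ℤ) (hm : ¬ (p : ℤ) ∣ m) (hm4 : (p : ℤ) ∣ m - 4) :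
    ‖(∑ k ∈ Finset.Icc 1 (p ^ a - 1),
        (p : ℚ_[p]) ^ (a - 1) * (∑ j ∈ Finset.Icc 1 k, (1 : ℚ_[p]) / (j : ℚ_[p])) *
          ((2 * k).choose k : ℚ_[p]) / (m : ℚ_[p]) ^ k) -
      2 * (if a = 1 then (1 : ℚ_[p]) else 0)‖ ≤ (p : ℝ) ^ (-1 : ℤ) :=
  sum_harmonic_central_mod_p_of_dvd_general p a ha m hm hm4
end

section
/- Let p be an odd prime, let a be a positive integer, and let m be an integer with p ∤ m and m ≢ 4 (mod p). Then, in the ring ℤ_p of p-adic integers, ∑_{k=1}^{p^a−1} p^{a−1}·H_k · C(2k, k) / m^k ≡ −(m(m−4) / p^a) · ∑_{k=1}^{p−1} C(2k, k) / (k·(4−m)^k) (mod p), where H_k = ∑_{j=1}^{k} 1/j is the k-th harmonic number (so p^{a−1}·H_k ∈ ℤ_p for 1 ≤ k ≤ p^a − 1), (m(m−4) / p^a) = (m(m−4)/p)^a is the Jacobi symbol, and 1/m^k, 1/(k·(4−m)^k) denote inverses in ℤ_p. -/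
/-!
Modulo `p`, the `p`-adic integer `p^b H_k` (`b = a - 1`, `k < p^a`) reduces to `H_⌊k/p^b⌋`, since
only the `j ≤ k` divisible by `p^b` contribute. Writing `k = q p^b + r` with `r < p^b`, Lucas'
theorem gives `C(2k,k) ≡ C(2q,q) C(2r,r)` and Fermat gives `m^k ≡ m^(q+r)`, so the left side
factors as `(∑_{q<p} H_q C(2q,q)/m^q) · (∑_{r<p^b} C(2r,r)/m^r)`.

For `k < p`, `C(2k,k) ≡ (-4)^k C(h,k)` with `h = (p-1)/2`, so `∑_{k<p} C(2k,k)/m^k ≡ (1 - 4/m)^h`,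
which is `(m(m-4)/p)` by Euler's criterion; iterating the factorisation, the second factor is its
`b`-th power. In the first factor the same substitution gives `∑_k C(h,k) H_k y^k` with `y = -4/m`,
and the identity `∑_k C(n,k) H_k y^k = -(1+y)^n ∑_k C(n,k) y'^k / k` for `(1+y)(1+y') = 1`
(both sides satisfy `F_{n+1} = (1+y) F_n + ((1+y)^(n+1) - 1)/(n+1)`), taken with `y' = -4/(4-m)`,
turns it into `-(m(m-4)/p)` times the right-hand sum.
-/

open Finset

def harmonicSum (K : Type*) [DivisionRing K] (n : ℕ) : K := ∑ j ∈ Icc 1 n, (j : K)⁻¹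

@[simp]
lemma harmonicSum_zero (K : Type*) [DivisionRing K] : harmonicSum K 0 = 0 := by
  simp [harmonicSum]

lemma harmonicSum_succ (K : Type*) [DivisionRing K] (n : ℕ) :
    harmonicSum K (n + 1) = harmonicSum K n + ((n + 1 : ℕ) : K)⁻¹ :=
  sum_Icc_succ_top (by omega) _

lemma sum_range_succ_choose_mul {R : Type*} [Semiring R] (n : ℕ) (g : ℕ → R) :
    ∑ k ∈ range (n + 2), ((n + 1).choose k : R) * g k =
      ∑ k ∈ range (n + 1), (n.choose k : R) * g (k + 1) +
        ∑ k ∈ range (n + 1), (n.choose k : R) * g k := by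
  rw [sum_range_succ' _ (n + 1)]
  simp only [Nat.choose_succ_succ', Nat.cast_add, add_mul, sum_add_distrib, add_assoc]
  rw [sum_range_succ (fun k => (n.choose (k + 1) : R) * g (k + 1)),
    sum_range_succ' (fun k => (n.choose k : R) * g k)]
  simp

lemma sum_range_mul_eq_sum_sum {M : Type*} [AddCommMonoid M] (f : ℕ → M) (n d : ℕ) :
    ∑ k ∈ range (n * d), f k = ∑ q ∈ range n, ∑ r ∈ range d, f (q * d + r) := by
  induction n with
  | zero => simp
  | succ n ih => rw [add_one_mul, sum_range_add, ih, sum_range_succ]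

lemma sum_Icc_one_sub_one_eq_sum_range {M : Type*} [AddCommMonoid M] {f : ℕ → M} (hf : f 0 = 0)
    (n : ℕ) : ∑ k ∈ Icc 1 (n - 1), f k = ∑ k ∈ range n, f k :=
  sum_subset (fun k hk => by simp only [mem_Icc, mem_range] at hk ⊢; omega) fun k hk hk' => by
    simp only [mem_Icc, mem_range, not_and, not_le] at hk hk'
    obtain rfl : k = 0 := by omega
    exact hf

lemma sum_Icc_one_ite_dvd {M : Type*} [AddCommMonoid M] {d : ℕ} (hd : 0 < d) (n : ℕ) (f : ℕ → M) :
    ∑ j ∈ Icc 1 n, (if d ∣ j then f (j / d) else 0) = ∑ i ∈ Icc 1 (n / d), f i := by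
  rw [← sum_filter]
  refine sum_nbij' (· / d) (· * d) ?_ ?_ ?_ ?_ ?_
  · intro j hj
    simp only [mem_filter, mem_Icc] at hj ⊢
    obtain ⟨⟨hj1, hjn⟩, c, rfl⟩ := hj
    rw [Nat.mul_div_cancel_left _ hd, Nat.le_div_iff_mul_le hd, mul_comm]
    exact ⟨Nat.pos_of_ne_zero (by rintro rfl; simp at hj1), hjn⟩
  · intro i hi
    simp only [mem_filter, mem_Icc] at hi ⊢
    exact ⟨⟨Nat.mul_pos hi.1 hd, (Nat.le_div_iff_mul_le hd).mp hi.2⟩, Nat.dvd_mul_left d i⟩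
  · intro j hj
    simp only [mem_filter, mem_Icc] at hj
    exact Nat.div_mul_cancel hj.2
  · intro i _
    exact Nat.mul_div_cancel i hd
  · intro j _
    rfl

section BinomialHarmonic

variable {K : Type*} [Field K]

lemma sum_choose_mul_pow_succ_div {n : ℕ} (hn : ∀ j ∈ Icc 1 (n + 1), (j : K) ≠ 0) (y : K) :
    ∑ k ∈ range (n + 1), (n.choose k : K) * y ^ (k + 1) / (k + 1 : ℕ) =
      ((1 + y) ^ (n + 1) - 1) / (n + 1 : ℕ) := by
  have hterm : ∀ k ∈ range (n + 1), (n.choose k : K) * y ^ (k + 1) / (k + 1 : ℕ) =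
      ((n + 1).choose (k + 1) : K) * y ^ (k + 1) / (n + 1 : ℕ) := by
    intro k hk
    rw [div_eq_div_iff (hn _ (by simp only [mem_range, mem_Icc] at hk ⊢; omega)) (hn _ (by simp))]
    have h := congrArg (Nat.cast (R := K)) (Nat.add_one_mul_choose_eq n k)
    push_cast at h ⊢
    linear_combination y ^ (k + 1) * h
  rw [sum_congr rfl hterm, ← sum_div, add_comm 1 y, add_pow, sum_range_succ' _ (n + 1)]
  simp only [one_pow, mul_one, pow_zero, Nat.choose_zero_right, Nat.cast_one, add_sub_cancel_right]
  exact congrArg (· / _) (sum_congr rfl fun k _ => mul_comm _ _)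

lemma sum_choose_succ_mul_harmonicSum_mul_pow {n : ℕ} (hn : ∀ j ∈ Icc 1 (n + 1), (j : K) ≠ 0)
    (y : K) :
    ∑ k ∈ range (n + 2), ((n + 1).choose k : K) * (harmonicSum K k * y ^ k) =
      (1 + y) * ∑ k ∈ range (n + 1), (n.choose k : K) * (harmonicSum K k * y ^ k) +
        ((1 + y) ^ (n + 1) - 1) / (n + 1 : ℕ) := by
  have hshift : ∑ k ∈ range (n + 1), (n.choose k : K) * (harmonicSum K (k + 1) * y ^ (k + 1)) =
      y * ∑ k ∈ range (n + 1), (n.choose k : K) * (harmonicSum K k * y ^ k) +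
        ∑ k ∈ range (n + 1), (n.choose k : K) * y ^ (k + 1) / (k + 1 : ℕ) := by
    rw [mul_sum, ← sum_add_distrib]
    refine sum_congr rfl fun k _ => ?_
    rw [harmonicSum_succ]
    ring
  rw [sum_range_succ_choose_mul, hshift, sum_choose_mul_pow_succ_div hn]
  ring

lemma sum_choose_succ_mul_pow_div {n : ℕ} (hn : ∀ j ∈ Icc 1 (n + 1), (j : K) ≠ 0) (y : K) :
    ∑ k ∈ range (n + 2), ((n + 1).choose k : K) * (y ^ k / k) =
      ∑ k ∈ range (n + 1), (n.choose k : K) * (y ^ k / k) +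
        ((1 + y) ^ (n + 1) - 1) / (n + 1 : ℕ) := by
  rw [sum_range_succ_choose_mul, ← sum_choose_mul_pow_succ_div hn, add_comm]
  simp only [mul_div_assoc]

lemma sum_choose_mul_harmonicSum_mul_pow {n : ℕ} (hn : ∀ j ∈ Icc 1 n, (j : K) ≠ 0) {y y' : K}
    (hyy' : (1 + y) * (1 + y') = 1) :
    ∑ k ∈ range (n + 1), (n.choose k : K) * (harmonicSum K k * y ^ k) =
      -(1 + y) ^ n * ∑ k ∈ range (n + 1), (n.choose k : K) * (y' ^ k / k) := by
  -- the `k = 0` term on the right is `1 / 0 = 0`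
  induction n with
  | zero => simp
  | succ n ih =>
    have hn' : ∀ j ∈ Icc 1 n, (j : K) ≠ 0 := fun j hj => hn j (Icc_subset_Icc_right n.le_succ hj)
    rw [sum_choose_succ_mul_harmonicSum_mul_pow hn, sum_choose_succ_mul_pow_div hn, ih hn']
    have h := congrArg (· ^ (n + 1)) hyy'
    simp only [mul_pow, one_pow] at h
    linear_combination (((n + 1 : ℕ) : K))⁻¹ * h

end BinomialHarmonic

lemma natCast_ne_zero_of_pos_of_lt {n j : ℕ} (hj : 0 < j) (hjn : j < n) : (j : ZMod n) ≠ 0 := by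
  rw [Ne, ZMod.natCast_eq_zero_iff]
  exact Nat.not_dvd_of_pos_of_lt hj hjn

section CentralBinomialModP

variable {p : ℕ} [Fact p.Prime]

lemma cast_choose_eq_choose_div_mul_choose_mod_pow (b n k : ℕ) :
    (n.choose k : ZMod p) =
      ((n / p ^ b).choose (k / p ^ b) : ZMod p) * ((n % p ^ b).choose (k % p ^ b) : ZMod p) := by
  have lucas (n k : ℕ) :
      (n.choose k : ZMod p) = ((n / p).choose (k / p) : ZMod p) * ((n % p).choose (k % p)) := by
    have h := (ZMod.intCast_eq_intCast_iff _ _ _).mpr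
      (Choose.choose_modEq_choose_mod_mul_choose_div (n := n) (k := k) (p := p))
    push_cast at h
    rw [h, mul_comm]
  induction b generalizing n k with
  | zero => simp [Nat.mod_one]
  | succ b ih =>
    have hdiv (j : ℕ) : j / p ^ b / p = j / p ^ (b + 1) := by rw [Nat.div_div_eq_div_mul, pow_succ]
    have hmod_div (j : ℕ) : j % p ^ (b + 1) / p ^ b = j / p ^ b % p := by
      rw [pow_succ, Nat.mod_mul_right_div_self]
    have hmod_mod (j : ℕ) : j % p ^ (b + 1) % p ^ b = j % p ^ b :=
      Nat.mod_mod_of_dvd j (pow_dvd_pow p b.le_succ)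
    rw [ih n k, lucas (n / p ^ b), ih (n % p ^ (b + 1)), hdiv, hdiv, hmod_div, hmod_div, hmod_mod,
      hmod_mod]
    ring

lemma cast_choose_two_mul_mul_pow_add {b q r : ℕ} (hr : r < p ^ b) :
    ((2 * (q * p ^ b + r)).choose (q * p ^ b + r) : ZMod p) =
      ((2 * q).choose q : ZMod p) * ((2 * r).choose r : ZMod p) := by
  have hpb : 0 < p ^ b := pow_pos (Fact.out : p.Prime).pos b
  have h2k : 2 * (q * p ^ b + r) = 2 * r + p ^ b * (2 * q) := by ring
  have hk : q * p ^ b + r = r + p ^ b * q := by ring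
  rw [cast_choose_eq_choose_div_mul_choose_mod_pow b,
    cast_choose_eq_choose_div_mul_choose_mod_pow b (2 * r), h2k, hk,
    Nat.add_mul_div_left _ _ hpb, Nat.add_mul_div_left _ _ hpb, Nat.add_mul_mod_self_left,
    Nat.add_mul_mod_self_left, Nat.div_eq_of_lt hr, Nat.mod_eq_of_lt hr, zero_add,
    Nat.choose_zero_right, Nat.cast_one, one_mul]
  -- both sides carry the factor `C(2r % p^b, r)`, which vanishes when `2r ≥ p^b`
  rcases lt_or_ge (2 * r) (p ^ b) with h | h
  · rw [Nat.div_eq_of_lt h, zero_add]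
  · have : 2 * r % p ^ b < r := by rw [Nat.mod_eq_sub_mod h, Nat.mod_eq_of_lt (by omega)]; omega
    simp [Nat.choose_eq_zero_of_lt this]

lemma cast_choose_two_mul_eq_neg_four_pow_mul_choose (hp : Odd p) {k : ℕ} (hk : k < p) :
    ((2 * k).choose k : ZMod p) = (-4) ^ k * ((p / 2).choose k : ZMod p) := by
  induction k with
  | zero => simp
  | succ k ih =>
    have hk1 : ((k + 1 : ℕ) : ZMod p) ≠ 0 := natCast_ne_zero_of_pos_of_lt k.succ_pos hk
    have hcentral := congrArg (Nat.cast (R := ZMod p)) (Nat.succ_mul_centralBinom_succ k)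
    have hchoose := congrArg (Nat.cast (R := ZMod p)) (Nat.choose_succ_right_eq (p / 2) k)
    have hhalf : ((p / 2 : ℕ) : ZMod p) * 2 + 1 = 0 := by
      exact_mod_cast
        (congrArg (Nat.cast (R := ZMod p)) (Nat.div_two_mul_two_add_one_of_odd hp)).trans
          (ZMod.natCast_self p)
    -- `(k + 1) C(2k + 2, k + 1) = 2 (2k + 1) C(2k, k)`, and `-4 (p/2 - k) = 2 (2k + 1) - 2p`
    simp only [Nat.centralBinom_eq_two_mul_choose] at hcentral
    push_cast at hcentral
    apply mul_left_cancel₀ hk1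
    rw [ih (by omega)] at hcentral
    rcases le_or_gt k (p / 2) with hkh | hkh
    · push_cast [Nat.cast_sub hkh] at hchoose ⊢
      linear_combination
        hcentral - (-4) ^ (k + 1) * hchoose + 2 * (-4) ^ k * ((p / 2).choose k : ZMod p) * hhalf
    · rw [Nat.choose_eq_zero_of_lt hkh] at hcentral
      rw [Nat.choose_eq_zero_of_lt (by omega : p / 2 < k + 1)]
      push_cast at hcentral ⊢
      simpa using hcentral

lemma sum_range_choose_two_mul_mul (hp : Odd p) (f : ℕ → ZMod p) :
    ∑ k ∈ range p, ((2 * k).choose k : ZMod p) * f k =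
      ∑ k ∈ range (p / 2 + 1), ((p / 2).choose k : ZMod p) * ((-4) ^ k * f k) := by
  have hhalf : p / 2 + 1 ≤ p := by have := hp.pos; omega
  calc ∑ k ∈ range p, ((2 * k).choose k : ZMod p) * f k
      = ∑ k ∈ range p, ((p / 2).choose k : ZMod p) * ((-4) ^ k * f k) := by
        refine sum_congr rfl fun k hk => ?_
        rw [cast_choose_two_mul_eq_neg_four_pow_mul_choose hp (mem_range.mp hk)]
        ring
    _ = _ := (sum_subset (range_subset_range.mpr hhalf) fun k _ hk => by
        rw [Nat.choose_eq_zero_of_lt (by simpa using hk), Nat.cast_zero, zero_mul]).symm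

lemma one_sub_four_div_pow_half {m : ZMod p} (hp : Odd p) (hm : m ≠ 0) :
    (1 - 4 / m) ^ (p / 2) = (m * (m - 4)) ^ (p / 2) := by
  have hsq : (m ^ 2) ^ (p / 2) = 1 := by
    rw [← pow_mul, show 2 * (p / 2) = p - 1 by have := Nat.two_mul_div_two_add_one_of_odd hp; omega]
    exact ZMod.pow_card_sub_one_eq_one hm
  rw [show 1 - 4 / m = m * (m - 4) / m ^ 2 by field_simp, div_pow, hsq, div_one]

lemma sum_range_choose_two_mul_div_pow (hp : Odd p) {m : ZMod p} (hm : m ≠ 0) :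
    ∑ k ∈ range p, ((2 * k).choose k : ZMod p) / m ^ k = (m * (m - 4)) ^ (p / 2) := by
  simp_rw [div_eq_mul_inv]
  rw [sum_range_choose_two_mul_mul hp, ← one_sub_four_div_pow_half hp hm, ← neg_add_eq_sub,
    add_pow]
  refine sum_congr rfl fun k _ => ?_
  rw [one_pow, mul_one, ← neg_div, div_pow]
  ring

lemma sum_range_pow_succ_mul_choose_two_mul_div_pow (w : ℕ → ZMod p) (m : ZMod p) (b : ℕ) :
    ∑ k ∈ range (p ^ (b + 1)), w (k / p ^ b) * ((2 * k).choose k : ZMod p) / m ^ k =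
      (∑ q ∈ range p, w q * ((2 * q).choose q : ZMod p) / m ^ q) *
        ∑ r ∈ range (p ^ b), ((2 * r).choose r : ZMod p) / m ^ r := by
  have hpb : 0 < p ^ b := pow_pos (Fact.out : p.Prime).pos b
  rw [pow_succ', sum_range_mul_eq_sum_sum, sum_mul_sum]
  refine sum_congr rfl fun q _ => sum_congr rfl fun r hr => ?_
  have hr : r < p ^ b := mem_range.mp hr
  rw [cast_choose_two_mul_mul_pow_add hr, mul_comm q, Nat.mul_add_div hpb, Nat.div_eq_of_lt hr,
    add_zero, pow_add, pow_mul, ZMod.pow_card_pow]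
  ring

lemma sum_range_pow_choose_two_mul_div_pow (hp : Odd p) {m : ZMod p} (hm : m ≠ 0) (b : ℕ) :
    ∑ k ∈ range (p ^ b), ((2 * k).choose k : ZMod p) / m ^ k = ((m * (m - 4)) ^ (p / 2)) ^ b := by
  induction b with
  | zero => simp
  | succ b ih =>
    have h := sum_range_pow_succ_mul_choose_two_mul_div_pow (fun _ => 1) m b
    simp only [one_mul] at h
    rw [h, ih, sum_range_choose_two_mul_div_pow hp hm, pow_succ']

lemma sum_range_harmonicSum_mul_choose_two_mul_div_pow (hp : Odd p) {m : ZMod p} (hm : m ≠ 0)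
    (hm4 : 4 - m ≠ 0) :
    ∑ k ∈ range p, harmonicSum (ZMod p) k * ((2 * k).choose k : ZMod p) / m ^ k =
      -(m * (m - 4)) ^ (p / 2) *
        ∑ k ∈ range p, ((2 * k).choose k : ZMod p) / ((k : ZMod p) * (4 - m) ^ k) := by
  have hinv : (1 + -4 / m) * (1 + -4 / (4 - m)) = 1 := by field_simp; ring
  have hunits : ∀ j ∈ Icc 1 (p / 2), (j : ZMod p) ≠ 0 := fun j hj =>
    natCast_ne_zero_of_pos_of_lt (mem_Icc.mp hj).1 (by have := mem_Icc.mp hj; omega)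
  calc ∑ k ∈ range p, harmonicSum (ZMod p) k * ((2 * k).choose k : ZMod p) / m ^ k
      = ∑ k ∈ range p, ((2 * k).choose k : ZMod p) * (harmonicSum (ZMod p) k / m ^ k) :=
        sum_congr rfl fun k _ => by ring
    _ = ∑ k ∈ range (p / 2 + 1),
          ((p / 2).choose k : ZMod p) * (harmonicSum (ZMod p) k * (-4 / m) ^ k) := by
        rw [sum_range_choose_two_mul_mul hp]
        exact sum_congr rfl fun k _ => by rw [div_pow]; ring
    _ = -(1 + -4 / m) ^ (p / 2) *
          ∑ k ∈ range (p / 2 + 1), ((p / 2).choose k : ZMod p) * ((-4 / (4 - m)) ^ k / k) :=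
        sum_choose_mul_harmonicSum_mul_pow hunits hinv
    _ = -(m * (m - 4)) ^ (p / 2) *
          ∑ k ∈ range p, ((2 * k).choose k : ZMod p) * (1 / ((k : ZMod p) * (4 - m) ^ k)) := by
        rw [sum_range_choose_two_mul_mul hp, ← one_sub_four_div_pow_half hp hm, neg_div,
          ← sub_eq_add_neg]
        exact congrArg _ (sum_congr rfl fun k _ => by rw [div_pow]; ring)
    _ = _ := by simp_rw [mul_one_div]

lemma sum_range_pow_succ_harmonicSum_mul_choose_two_mul_div_pow (hp : Odd p) {m : ZMod p}
    (hm : m ≠ 0) (hm4 : 4 - m ≠ 0) (b : ℕ) :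
    ∑ k ∈ range (p ^ (b + 1)),
        harmonicSum (ZMod p) (k / p ^ b) * ((2 * k).choose k : ZMod p) / m ^ k =
      -((m * (m - 4)) ^ (p / 2)) ^ (b + 1) *
        ∑ k ∈ range p, ((2 * k).choose k : ZMod p) / ((k : ZMod p) * (4 - m) ^ k) := by
  rw [sum_range_pow_succ_mul_choose_two_mul_div_pow,
    sum_range_harmonicSum_mul_choose_two_mul_div_pow hp hm hm4,
    sum_range_pow_choose_two_mul_div_pow hp hm]
  ring

end CentralBinomialModP

namespace Padic

variable {p : ℕ} [Fact p.Prime]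

def HasResidue (x : ℚ_[p]) (c : ZMod p) : Prop :=
  ∃ y : ℤ_[p], (y : ℚ_[p]) = x ∧ PadicInt.toZMod y = c

namespace HasResidue

lemma natCast (n : ℕ) : HasResidue (n : ℚ_[p]) (n : ZMod p) :=
  ⟨n, by simp, map_natCast _ n⟩

lemma intCast (n : ℤ) : HasResidue (n : ℚ_[p]) (n : ZMod p) :=
  ⟨n, by simp, map_intCast _ n⟩

variable {x x' : ℚ_[p]} {c c' : ZMod p}

lemma add (h : HasResidue x c) (h' : HasResidue x' c') : HasResidue (x + x') (c + c') := by
  obtain ⟨y, rfl, rfl⟩ := h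
  obtain ⟨y', rfl, rfl⟩ := h'
  exact ⟨y + y', by simp, map_add _ y y'⟩

lemma mul (h : HasResidue x c) (h' : HasResidue x' c') : HasResidue (x * x') (c * c') := by
  obtain ⟨y, rfl, rfl⟩ := h
  obtain ⟨y', rfl, rfl⟩ := h'
  exact ⟨y * y', by simp, map_mul _ y y'⟩

lemma neg (h : HasResidue x c) : HasResidue (-x) (-c) := by
  obtain ⟨y, rfl, rfl⟩ := h
  exact ⟨-y, by simp, map_neg _ y⟩

lemma pow (h : HasResidue x c) (n : ℕ) : HasResidue (x ^ n) (c ^ n) := by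
  obtain ⟨y, rfl, rfl⟩ := h
  exact ⟨y ^ n, by simp, map_pow _ y n⟩

lemma inv (h : HasResidue x c) (hc : c ≠ 0) : HasResidue x⁻¹ c⁻¹ := by
  obtain ⟨y, rfl, rfl⟩ := h
  have hy : IsUnit y := by
    by_contra hy
    refine hc ?_
    rw [← RingHom.mem_ker, PadicInt.ker_toZMod]
    exact mem_nonunits_iff.mpr hy
  obtain ⟨u, rfl⟩ := hy
  refine ⟨↑u⁻¹, eq_inv_of_mul_eq_one_left ?_, map_units_inv PadicInt.toZMod u⟩
  rw [← PadicInt.coe_mul, Units.inv_mul, PadicInt.coe_one]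

lemma div (h : HasResidue x c) (h' : HasResidue x' c') (hc' : c' ≠ 0) :
    HasResidue (x / x') (c / c') :=
  h.mul (h'.inv hc')

lemma sum {ι : Type*} (s : Finset ι) {f : ι → ℚ_[p]} {g : ι → ZMod p}
    (h : ∀ i ∈ s, HasResidue (f i) (g i)) : HasResidue (∑ i ∈ s, f i) (∑ i ∈ s, g i) := by
  classical
  induction s using Finset.induction_on with
  | empty => exact ⟨0, by simp, by simp⟩
  | insert i s hi ih =>
    rw [sum_insert hi, sum_insert hi]
    exact (h i (mem_insert_self i s)).add (ih fun j hj => h j (mem_insert_of_mem hj))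

end HasResidue

lemma norm_sub_le_of_hasResidue {x x' : ℚ_[p]} {c : ZMod p} (h : HasResidue x c)
    (h' : HasResidue x' c) : ‖x - x'‖ ≤ (p : ℝ) ^ (-1 : ℤ) := by
  obtain ⟨y, rfl, hy⟩ := h
  obtain ⟨y', rfl, hy'⟩ := h'
  have hmem : y - y' ∈ IsLocalRing.maximalIdeal ℤ_[p] := by
    rw [← PadicInt.ker_toZMod, RingHom.mem_ker, map_sub, hy, hy', sub_self]
  have hlt : ‖y - y'‖ < (p : ℝ) ^ (0 : ℤ) := by
    rw [zpow_zero]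
    exact PadicInt.mem_nonunits.mp hmem
  rw [← PadicInt.coe_sub, ← PadicInt.norm_def]
  exact (PadicInt.norm_lt_pow_iff_norm_le_pow_sub_one _ 0).mp hlt

lemma hasResidue_pow_mul_inv_natCast {b j : ℕ} (hj : 0 < j) (hjb : j < p ^ (b + 1)) :
    HasResidue ((p : ℚ_[p]) ^ b * (j : ℚ_[p])⁻¹)
      (if p ^ b ∣ j then ((j / p ^ b : ℕ) : ZMod p)⁻¹ else 0) := by
  have hp : p.Prime := Fact.out
  obtain ⟨e, u, hpu, rfl⟩ := Nat.exists_eq_pow_mul_and_not_dvd hj.ne' p hp.one_lt.ne'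
  have hu : (u : ZMod p) ≠ 0 := by rwa [Ne, ZMod.natCast_eq_zero_iff]
  have heb : e ≤ b := by
    by_contra! h
    exact not_lt.mpr (Nat.le_of_dvd hj (dvd_mul_of_dvd_left (pow_dvd_pow p h) u)) hjb
  have hp0 : (p : ℚ_[p]) ≠ 0 := by exact_mod_cast hp.ne_zero
  rw [Nat.cast_mul, Nat.cast_pow, mul_inv, ← mul_assoc, ← pow_sub₀ _ hp0 heb]
  convert ((HasResidue.natCast p).pow (b - e)).mul ((HasResidue.natCast u).inv hu) using 1
  split_ifs with hdvd
  · have hcop : (p ^ b).Coprime u := ((Nat.Prime.coprime_iff_not_dvd hp).mpr hpu).pow_left b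
    obtain rfl : e = b := le_antisymm heb
      ((Nat.pow_dvd_pow_iff_le_right hp.one_lt).mp (hcop.dvd_mul_right.mp hdvd))
    rw [Nat.sub_self, pow_zero, one_mul, Nat.mul_div_cancel_left _ (pow_pos hp.pos e)]
  · have heb' : e < b := lt_of_le_of_ne heb (by rintro rfl; exact hdvd (dvd_mul_right _ _))
    rw [ZMod.natCast_self, zero_pow (by omega), zero_mul]

lemma hasResidue_pow_mul_harmonicSum {b k : ℕ} (hk : k < p ^ (b + 1)) :
    HasResidue ((p : ℚ_[p]) ^ b * harmonicSum ℚ_[p] k) (harmonicSum (ZMod p) (k / p ^ b)) := by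
  rw [harmonicSum, mul_sum, harmonicSum,
    ← sum_Icc_one_ite_dvd (pow_pos (Fact.out : p.Prime).pos b) k]
  refine HasResidue.sum _ fun j hj => ?_
  have hj := mem_Icc.mp hj
  exact hasResidue_pow_mul_inv_natCast (by omega) (by omega)

lemma hasResidue_sum_harmonicSum_mul_choose_two_mul_div_pow {b : ℕ} {n : ℤ}
    (hn : (n : ZMod p) ≠ 0) :
    HasResidue (∑ k ∈ Icc 1 (p ^ (b + 1) - 1),
        (p : ℚ_[p]) ^ b * harmonicSum ℚ_[p] k * ((2 * k).choose k : ℚ_[p]) / (n : ℚ_[p]) ^ k)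
      (∑ k ∈ range (p ^ (b + 1)),
        harmonicSum (ZMod p) (k / p ^ b) * ((2 * k).choose k : ZMod p) / (n : ZMod p) ^ k) := by
  rw [← sum_Icc_one_sub_one_eq_sum_range (by simp)]
  refine HasResidue.sum _ fun k hk => ?_
  have hk := mem_Icc.mp hk
  exact ((hasResidue_pow_mul_harmonicSum (by omega)).mul (HasResidue.natCast _)).div
    ((HasResidue.intCast n).pow k) (pow_ne_zero k hn)

lemma hasResidue_sum_choose_two_mul_div_mul_pow {n : ℤ} (hn : (n : ZMod p) ≠ 0) :
    HasResidue (∑ k ∈ Icc 1 (p - 1), ((2 * k).choose k : ℚ_[p]) / ((k : ℚ_[p]) * (n : ℚ_[p]) ^ k))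
      (∑ k ∈ range p, ((2 * k).choose k : ZMod p) / ((k : ZMod p) * (n : ZMod p) ^ k)) := by
  rw [← sum_Icc_one_sub_one_eq_sum_range (by simp)]
  refine HasResidue.sum _ fun k hk => ?_
  have hk := mem_Icc.mp hk
  exact (HasResidue.natCast _).div ((HasResidue.natCast k).mul ((HasResidue.intCast n).pow k))
    (mul_ne_zero (natCast_ne_zero_of_pos_of_lt hk.1 (by omega)) (pow_ne_zero k hn))

end Padic

theorem sum_harmonic_central_mod_p_of_not_dvd (p : ℕ) [Fact p.Prime] (hp : Odd p)
    (a : ℕ) (ha : 0 < a) (m : ℤ) (hm : ¬ (p : ℤ) ∣ m) (hm4 : ¬ (p : ℤ) ∣ m - 4) :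
    ‖(∑ k ∈ Finset.Icc 1 (p ^ a - 1),
        (p : ℚ_[p]) ^ (a - 1) * (∑ j ∈ Finset.Icc 1 k, (1 : ℚ_[p]) / (j : ℚ_[p])) *
          ((2 * k).choose k : ℚ_[p]) / (m : ℚ_[p]) ^ k) -
      (-(legendreSym p (m * (m - 4)) : ℚ_[p]) ^ a *
        ∑ k ∈ Finset.Icc 1 (p - 1),
          ((2 * k).choose k : ℚ_[p]) / ((k : ℚ_[p]) * ((4 - m : ℤ) : ℚ_[p]) ^ k))‖
      ≤ (p : ℝ) ^ (-1 : ℤ) := by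
  obtain ⟨b, rfl⟩ : ∃ b, a = b + 1 := ⟨a - 1, by omega⟩
  have hm0 : (m : ZMod p) ≠ 0 := by rwa [Ne, ZMod.intCast_zmod_eq_zero_iff_dvd]
  have h4m : ((4 - m : ℤ) : ZMod p) ≠ 0 := by
    rwa [Ne, ZMod.intCast_zmod_eq_zero_iff_dvd, dvd_sub_comm]
  have hL := Padic.hasResidue_sum_harmonicSum_mul_choose_two_mul_div_pow (b := b) hm0
  have hR := ((Padic.HasResidue.intCast (legendreSym p (m * (m - 4)))).pow (b + 1)).neg.mul
    (Padic.hasResidue_sum_choose_two_mul_div_mul_pow h4m)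
  have hχ : (legendreSym p (m * (m - 4)) : ZMod p) = ((m : ZMod p) * (m - 4)) ^ (p / 2) := by
    rw [legendreSym.eq_pow]
    push_cast
    ring
  push_cast at h4m
  rw [sum_range_pow_succ_harmonicSum_mul_choose_two_mul_div_pow hp hm0 h4m] at hL
  rw [hχ, Int.cast_sub (R := ZMod p), Int.cast_ofNat (R := ZMod p)] at hR
  simp only [one_div, Nat.add_sub_cancel]
  exact Padic.norm_sub_le_of_hasResidue hL hR
end

section
/- Let p be an odd prime and let m be an integer with Δ = m(m−4) ≢ 0 (mod p). Then, in the ring ℤ_p of p-adic integers, (2/(m−4)) · (v_p(m−4, 4−m) − (m−4)^p)/p ≡ (m/2) · (Δ/p) · u_{p−(Δ/p)}(m−2, 1)/p − q_p(m−4) (mod p), where (Δ/p) is the Legendre symbol, q_p(x) = (x^{p−1} − 1)/p is the Fermat quotient, and both v_p(m−4,4−m) − (m−4)^p and u_{p−(Δ/p)}(m−2,1) are divisible by p, so the displayed quotients lie in ℤ_p. -/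
/-!
Write `t = m - 4`, so `Δ = t (t + 4)` is the discriminant of both `x² - t x - t` and
`x² - (t + 2) x + 1`, and the roots of the first square to `t` times the roots of the second;
hence `v_{2p}(t, -t) = t^p v_p(t + 2, 1)`. With `ε = (Δ/p)`, Binet's formula in an algebraic
closure of `𝔽_p`, where Frobenius fixes or swaps the two roots according to `ε`, gives
`v_p(t, -t) ≡ t^p (mod p)`, `p ∣ u_{p-ε}(t + 2, 1)` and then, through
`v_n² - Δ u_n² = 4`, `v_{p-ε}(t + 2, 1) ≡ 2 (mod p²)`. Feeding these into
`v_p(t, -t)² = t^p v_p(t + 2, 1) - 2 t^p` and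
`2 v_p(t + 2, 1) = (t + 2) v_{p-ε} + ε Δ u_{p-ε}` yields
`p² ∣ 4 v_p(t, -t) - 2 t^p - 2 t - ε Δ u_{p-ε}(t + 2, 1)`, which is `2 t p` times the difference
whose norm is bounded.
-/

/-- The Lucas sequence `u_n(A, B)`: `u_0 = 0`, `u_1 = 1`,
`u_{n+1} = A·u_n − B·u_{n−1}`. -/
def lucasU (A B : ℤ) : ℕ → ℤ
  | 0 => 0
  | 1 => 1
  | n + 2 => A * lucasU A B (n + 1) - B * lucasU A B n

/-- The Lucas sequence `v_n(A, B)`: `v_0 = 2`, `v_1 = A`,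
`v_{n+1} = A·v_n − B·v_{n−1}`. -/
def lucasV (A B : ℤ) : ℕ → ℤ
  | 0 => 2
  | 1 => A
  | n + 2 => A * lucasV A B (n + 1) - B * lucasV A B n

open Polynomial in
theorem IsAlgClosed.exists_add_eq_mul_eq {K : Type*} [Field K] [IsAlgClosed K] (a b : K) :
    ∃ α β : K, a = α + β ∧ b = α * β := by
  obtain ⟨α, hα⟩ := IsAlgClosed.exists_root (X ^ 2 - C a * X + C b)
    (by rw [show (X ^ 2 - C a * X + C b : K[X]).degree = 2 by compute_degree!]; decide)
  obtain ⟨β, -, hsum, hprod⟩ := vieta_formula_quadratic (b := a) (c := b) (x := α)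
    (by simpa [sq] using hα)
  exact ⟨α, β, hsum.symm, hprod.symm⟩

section Binet

variable {R : Type*} [CommRing R] {A B : ℤ} {α β : R}

theorem lucasV_eq_pow_add_pow (hA : (A : R) = α + β) (hB : (B : R) = α * β) :
    ∀ n, (lucasV A B n : R) = α ^ n + β ^ n
  | 0 => by norm_num [lucasV]
  | 1 => by simp [lucasV, hA]
  | n + 2 => by
    rw [lucasV]
    push_cast
    rw [lucasV_eq_pow_add_pow hA hB n, lucasV_eq_pow_add_pow hA hB (n + 1), hA, hB]
    ring

theorem sub_mul_lucasU_eq_pow_sub_pow (hA : (A : R) = α + β) (hB : (B : R) = α * β) :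
    ∀ n, (α - β) * lucasU A B n = α ^ n - β ^ n
  | 0 => by simp [lucasU]
  | 1 => by simp [lucasU]
  | n + 2 => by
    rw [lucasU]
    push_cast
    linear_combination (α + β) * sub_mul_lucasU_eq_pow_sub_pow hA hB (n + 1)
      - α * β * sub_mul_lucasU_eq_pow_sub_pow hA hB n + (α - β) * lucasU A B (n + 1) * hA
      - (α - β) * lucasU A B n * hB

end Binet

section Identities

variable (A B : ℤ) (n : ℕ)

theorem lucasV_sq_sub_mul_lucasU_sq :
    lucasV A B n ^ 2 - (A ^ 2 - 4 * B) * lucasU A B n ^ 2 = 4 * B ^ n := by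
  obtain ⟨α, β, hA, hB⟩ := IsAlgClosed.exists_add_eq_mul_eq (A : ℂ) B
  have hU := sub_mul_lucasU_eq_pow_sub_pow hA hB n
  apply Int.cast_injective (α := ℂ)
  push_cast
  rw [lucasV_eq_pow_add_pow hA hB, hA, hB]
  linear_combination -((α - β) * lucasU A B n + α ^ n - β ^ n) * hU

theorem lucasV_two_mul : lucasV A B (2 * n) = lucasV A B n ^ 2 - 2 * B ^ n := by
  obtain ⟨α, β, hA, hB⟩ := IsAlgClosed.exists_add_eq_mul_eq (A : ℂ) B
  apply Int.cast_injective (α := ℂ)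
  push_cast
  rw [lucasV_eq_pow_add_pow hA hB, lucasV_eq_pow_add_pow hA hB, hB]
  ring

theorem lucasV_two_mul_eq_lucasV_sq_sub :
    lucasV A B (2 * n) = lucasV (A ^ 2 - 2 * B) (B ^ 2) n := by
  obtain ⟨α, β, hA, hB⟩ := IsAlgClosed.exists_add_eq_mul_eq (A : ℂ) B
  apply Int.cast_injective (α := ℂ)
  rw [lucasV_eq_pow_add_pow hA hB, lucasV_eq_pow_add_pow (α := α ^ 2) (β := β ^ 2)
    (by push_cast; rw [hA, hB]; ring) (by push_cast; rw [hB]; ring)]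
  ring

theorem lucasV_mul_mul_sq (c : ℤ) : lucasV (c * A) (c ^ 2 * B) n = c ^ n * lucasV A B n := by
  obtain ⟨α, β, hA, hB⟩ := IsAlgClosed.exists_add_eq_mul_eq (A : ℂ) B
  apply Int.cast_injective (α := ℂ)
  push_cast
  rw [lucasV_eq_pow_add_pow hA hB, lucasV_eq_pow_add_pow (α := c * α) (β := c * β)
    (by push_cast; rw [hA]; ring) (by push_cast; rw [hB]; ring)]
  ring

theorem two_mul_lucasV_succ :
    2 * lucasV A B (n + 1) = A * lucasV A B n + (A ^ 2 - 4 * B) * lucasU A B n := by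
  obtain ⟨α, β, hA, hB⟩ := IsAlgClosed.exists_add_eq_mul_eq (A : ℂ) B
  have hU := sub_mul_lucasU_eq_pow_sub_pow hA hB n
  apply Int.cast_injective (α := ℂ)
  push_cast
  rw [lucasV_eq_pow_add_pow hA hB, lucasV_eq_pow_add_pow hA hB, hA, hB]
  linear_combination -(α - β) * hU

theorem two_mul_mul_lucasV :
    2 * B * lucasV A B n = A * lucasV A B (n + 1) - (A ^ 2 - 4 * B) * lucasU A B (n + 1) := by
  obtain ⟨α, β, hA, hB⟩ := IsAlgClosed.exists_add_eq_mul_eq (A : ℂ) B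
  have hU := sub_mul_lucasU_eq_pow_sub_pow hA hB (n + 1)
  apply Int.cast_injective (α := ℂ)
  push_cast
  rw [lucasV_eq_pow_add_pow hA hB, lucasV_eq_pow_add_pow hA hB, hA, hB]
  linear_combination (α - β) * hU

end Identities

theorem dvd_lucasV_sub_pow (p : ℕ) [Fact p.Prime] (A B : ℤ) :
    (p : ℤ) ∣ lucasV A B p - A ^ p := by
  obtain ⟨α, β, hA, hB⟩ := IsAlgClosed.exists_add_eq_mul_eq (A : AlgebraicClosure (ZMod p)) B
  rw [← CharP.intCast_eq_zero_iff (AlgebraicClosure (ZMod p)) p]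
  push_cast
  rw [lucasV_eq_pow_add_pow hA hB, hA, add_pow_char, sub_self]

theorem Odd.isCoprime_natCast_two {p : ℕ} (hp : Odd p) : IsCoprime (p : ℤ) 2 := by
  exact_mod_cast Nat.isCoprime_iff_coprime.mpr hp.coprime_two_right

theorem pow_sub_legendreSym_eq_one {K : Type*} [Field K] {p : ℕ} [Fact p.Prime] [CharP K p]
    (hp : Odd p) {A : ℤ} (hD : ¬ (p : ℤ) ∣ A ^ 2 - 4) {α β : K} (hA : (A : K) = α + β)
    (hB : α * β = 1) : α ^ ((p : ℤ) - legendreSym p (A ^ 2 - 4)).toNat = 1 := by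
  have h2 : (2 : K) ≠ 0 := by
    rw [← Int.cast_two, Ne, CharP.intCast_eq_zero_iff K p]
    exact (Prime.coprime_iff_not_dvd (Nat.prime_iff_prime_int.mp Fact.out)).mp
      hp.isCoprime_natCast_two
  have hsum : α ^ p + β ^ p = α + β := by
    have h := congrArg (ZMod.castHom (dvd_refl p) K) (ZMod.pow_card (A : ZMod p))
    rw [map_pow, map_intCast] at h
    rw [← add_pow_char, ← hA, h]
  have hdiff : α ^ p - β ^ p = legendreSym p (A ^ 2 - 4) * (α - β) := by
    have hEuler := congrArg (ZMod.castHom (dvd_refl p) K) (legendreSym.eq_pow p (A ^ 2 - 4))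
    rw [map_pow, map_intCast, map_intCast] at hEuler
    have hδ : (α - β) ^ 2 = ((A ^ 2 - 4 : ℤ) : K) := by
      push_cast
      rw [hA]
      linear_combination (-4) * hB
    rw [← sub_pow_char, hEuler, ← hδ, ← pow_mul, ← pow_succ,
      Nat.two_mul_div_two_add_one_of_odd hp]
  have hα : α ≠ 0 := left_ne_zero_of_mul_eq_one hB
  have hD' : ((A ^ 2 - 4 : ℤ) : ZMod p) ≠ 0 := by
    rwa [Ne, ZMod.intCast_zmod_eq_zero_iff_dvd]
  rcases legendreSym.eq_one_or_neg_one p hD' with hε | hε <;> rw [hε] at hdiff ⊢ <;>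
    push_cast at hdiff
  · have hfix : α ^ p = α := mul_left_cancel₀ h2 (by linear_combination hsum + hdiff)
    rw [show ((p : ℤ) - 1).toNat = p - 1 by omega]
    refine mul_left_cancel₀ hα ?_
    rw [← pow_succ', Nat.sub_add_cancel (Fact.out : p.Prime).one_le, hfix, mul_one]
  · have hswap : α ^ p = β := mul_left_cancel₀ h2 (by linear_combination hsum + hdiff)
    rw [show ((p : ℤ) - -1).toNat = p + 1 by omega, pow_succ, hswap, mul_comm, hB]

theorem two_mul_lucasV_eq_of_add_eq (A : ℤ) {ε : ℤ} (hε : ε = 1 ∨ ε = -1) {n k : ℕ}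
    (hnk : (n : ℤ) + ε = k) :
    2 * lucasV A 1 k = A * lucasV A 1 n + ε * (A ^ 2 - 4) * lucasU A 1 n := by
  rcases hε with rfl | rfl
  · obtain rfl : k = n + 1 := by omega
    linear_combination two_mul_lucasV_succ A 1 n
  · obtain rfl : n = k + 1 := by omega
    linear_combination two_mul_mul_lucasV A 1 k

theorem dvd_lucasU_and_dvd_lucasV_sub_two {p : ℕ} [Fact p.Prime] (hp : Odd p) {A : ℤ}
    (hD : ¬ (p : ℤ) ∣ A ^ 2 - 4) :
    (p : ℤ) ∣ lucasU A 1 ((p : ℤ) - legendreSym p (A ^ 2 - 4)).toNat ∧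
      (p : ℤ) ∣ lucasV A 1 ((p : ℤ) - legendreSym p (A ^ 2 - 4)).toNat - 2 := by
  set K := AlgebraicClosure (ZMod p)
  obtain ⟨α, β, hA, hB⟩ := IsAlgClosed.exists_add_eq_mul_eq (A : K) ((1 : ℤ) : K)
  have hαβ : α * β = 1 := by rw [← hB, Int.cast_one]
  have hα := pow_sub_legendreSym_eq_one hp hD hA hαβ
  have hβ := pow_sub_legendreSym_eq_one hp hD (hA.trans (add_comm α β)) (by rwa [mul_comm])
  have hδ : α - β ≠ 0 := by
    refine fun h ↦ hD ((CharP.intCast_eq_zero_iff K p _).mp ?_)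
    rw [Int.cast_sub, Int.cast_pow, hA, Int.cast_ofNat]
    linear_combination (α - β) * h + 4 * hαβ
  simp only [← CharP.intCast_eq_zero_iff K p, Int.cast_sub, Int.cast_ofNat]
  refine ⟨?_, ?_⟩
  · have hU := sub_mul_lucasU_eq_pow_sub_pow hA hB ((p : ℤ) - legendreSym p (A ^ 2 - 4)).toNat
    rw [hα, hβ, sub_self] at hU
    exact (mul_eq_zero.mp hU).resolve_left hδ
  · rw [lucasV_eq_pow_add_pow hA hB, hα, hβ]
    norm_num

theorem sq_dvd_lucasV_sub_two {p : ℕ} [Fact p.Prime] (hp : Odd p) {A : ℤ}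
    (hD : ¬ (p : ℤ) ∣ A ^ 2 - 4) :
    (p : ℤ) ^ 2 ∣ lucasV A 1 ((p : ℤ) - legendreSym p (A ^ 2 - 4)).toNat - 2 := by
  set n := ((p : ℤ) - legendreSym p (A ^ 2 - 4)).toNat
  obtain ⟨hU, hV⟩ := dvd_lucasU_and_dvd_lucasV_sub_two hp hD
  have hP : Prime (p : ℤ) := Nat.prime_iff_prime_int.mp Fact.out
  have hfactor : (lucasV A 1 n - 2) * (lucasV A 1 n + 2) = (A ^ 2 - 4) * lucasU A 1 n ^ 2 := by
    linear_combination lucasV_sq_sub_mul_lucasU_sq A 1 n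
  have hcop : IsCoprime ((p : ℤ) ^ 2) (lucasV A 1 n + 2) := by
    refine IsCoprime.pow_left ((Prime.coprime_iff_not_dvd hP).mpr fun h ↦ ?_)
    refine (Prime.coprime_iff_not_dvd hP).mp (hp.isCoprime_natCast_two.pow_right (n := 2)) ?_
    convert dvd_sub h hV using 1
    ring
  exact hcop.dvd_of_dvd_mul_right (hfactor ▸ dvd_mul_of_dvd_right (pow_dvd_pow_of_dvd hU 2) _)

theorem sq_dvd_four_mul_lucasV_sub {p : ℕ} [Fact p.Prime] (hp : Odd p) {t : ℤ}
    (ht : ¬ (p : ℤ) ∣ t * (t + 4)) :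
    (p : ℤ) ^ 2 ∣ 4 * lucasV t (-t) p - 2 * t ^ p - 2 * t - legendreSym p (t * (t + 4)) *
      (t * (t + 4)) * lucasU (t + 2) 1 ((p : ℤ) - legendreSym p (t * (t + 4))).toNat := by
  have hD : (t + 2) ^ 2 - 4 = t * (t + 4) := by ring
  have hP : Prime (p : ℤ) := Nat.prime_iff_prime_int.mp Fact.out
  set ε := legendreSym p (t * (t + 4))
  set n := ((p : ℤ) - ε).toNat
  set V := lucasV t (-t) p
  set W := lucasV (t + 2) 1 n
  obtain ⟨c, hc⟩ : (p : ℤ) ∣ V - t ^ p := dvd_lucasV_sub_pow p t (-t)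
  obtain ⟨s, hs⟩ : (p : ℤ) ^ 2 ∣ W - 2 := by
    simpa only [hD] using sq_dvd_lucasV_sub_two hp (A := t + 2) (hD ▸ ht)
  have hshift : 2 * lucasV (t + 2) 1 p = (t + 2) * W + ε * (t * (t + 4)) * lucasU (t + 2) 1 n := by
    have hε : ε = 1 ∨ ε = -1 := legendreSym.eq_one_or_neg_one p
      (by rwa [Ne, ZMod.intCast_zmod_eq_zero_iff_dvd])
    have hp1 := (Fact.out : p.Prime).one_le
    rw [← hD]
    refine two_mul_lucasV_eq_of_add_eq (t + 2) hε ?_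
    rw [Int.toNat_of_nonneg (by rcases hε with h | h <;> rw [h] <;> omega), sub_add_cancel]
  have hsq : V ^ 2 = t ^ p * lucasV (t + 2) 1 p - 2 * t ^ p := by
    have h := lucasV_mul_mul_sq (t + 2) 1 p t
    rw [show t * (t + 2) = t ^ 2 - 2 * -t by ring, show t ^ 2 * 1 = (-t) ^ 2 by ring,
      ← lucasV_two_mul_eq_lucasV_sq_sub, lucasV_two_mul, hp.neg_pow] at h
    linear_combination h
  -- `t^p` times the right-hand side is `-2 (V - t^p)² + t^p (t + 2) (W - 2)`.
  have hpt : IsCoprime ((p : ℤ) ^ 2) (t ^ p) :=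
    ((Prime.coprime_iff_not_dvd hP).mpr fun h ↦ ht (h.mul_right _)).pow
  refine hpt.dvd_of_dvd_mul_left ⟨t ^ p * (t + 2) * s - 2 * c ^ 2, ?_⟩
  linear_combination t ^ p * hshift + 2 * hsq - 2 * (V - t ^ p + p * c) * hc + t ^ p * (t + 2) * hs

theorem Padic.norm_intCast_div_mul_le {p : ℕ} [Fact p.Prime] {x y : ℤ} (hx : (p : ℤ) ^ 2 ∣ x)
    (hy : IsCoprime y p) : ‖(x : ℚ_[p]) / (y * p)‖ ≤ (p : ℝ) ^ (-1 : ℤ) := by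
  have hp : (0 : ℝ) < p := by exact_mod_cast (Fact.out : p.Prime).pos
  rw [norm_div, norm_mul, Padic.norm_intCast_eq_one_iff.mpr hy, Padic.norm_p, one_mul,
    div_inv_eq_mul]
  calc ‖(x : ℚ_[p])‖ * p ≤ (p : ℝ) ^ (-(2 : ℕ) : ℤ) * p :=
        mul_le_mul_of_nonneg_right ((Padic.norm_int_le_pow_iff_dvd x 2).mpr hx) hp.le
    _ = (p : ℝ) ^ (-1 : ℤ) := by rw [← zpow_add_one₀ hp.ne']; norm_num

theorem lucasV_fermat_quotient_relation (p : ℕ) [Fact p.Prime] (hp : Odd p)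
    (m : ℤ) (Δ : ℤ) (hΔ : Δ = m * (m - 4)) (hΔp : ¬ (p : ℤ) ∣ Δ) :
    ‖(2 / ((m : ℚ_[p]) - 4)) *
        (((lucasV (m - 4) (4 - m) p : ℤ) : ℚ_[p]) - ((m - 4 : ℤ) : ℚ_[p]) ^ p) / (p : ℚ_[p]) -
      (((m : ℚ_[p]) / 2) * (legendreSym p Δ : ℚ_[p]) *
          ((lucasU (m - 2) 1 ((p : ℤ) - legendreSym p Δ).toNat : ℤ) : ℚ_[p]) / (p : ℚ_[p]) -
        (((m - 4 : ℤ) : ℚ_[p]) ^ (p - 1) - 1) / (p : ℚ_[p]))‖ ≤ (p : ℝ) ^ (-1 : ℤ) := by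
  subst hΔ
  have hP : Prime (p : ℤ) := Nat.prime_iff_prime_int.mp Fact.out
  have key := sq_dvd_four_mul_lucasV_sub hp (t := m - 4) (by convert hΔp using 2; ring)
  rw [show (m - 4) * (m - 4 + 4) = m * (m - 4) by ring, show m - 4 + 2 = m - 2 by ring,
    show -(m - 4) = 4 - m by ring] at key
  have hm : ¬ (p : ℤ) ∣ m - 4 := fun h ↦ hΔp (h.mul_left m)
  have hcop : IsCoprime (2 * (m - 4)) p :=
    (hp.isCoprime_natCast_two.mul_right ((Prime.coprime_iff_not_dvd hP).mpr hm)).symm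
  refine le_of_eq_of_le (congrArg norm ?_) (Padic.norm_intCast_div_mul_le key hcop)
  have hm4 : (m : ℚ_[p]) - 4 ≠ 0 := by
    exact_mod_cast fun h ↦ hm (by rw [h]; exact dvd_zero _)
  have hp0 : (p : ℚ_[p]) ≠ 0 := by exact_mod_cast (Fact.out : p.Prime).ne_zero
  have hpow : ((m : ℚ_[p]) - 4) ^ p = ((m : ℚ_[p]) - 4) ^ (p - 1) * ((m : ℚ_[p]) - 4) := by
    rw [← pow_succ, Nat.sub_add_cancel (Fact.out : p.Prime).one_le]
  push_cast
  rw [hpow]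
  field_simp
  ring
end

section
/- For every integer m and every natural number n, one has the exact identity m^n · v_{2n+1}(m−4, 4−m) = (m−4)^{n+1} · u_{2n+1}(m, m), where u and v are the Lucas sequences. -/
def IsLucasSequence {R : Type*} [CommRing R] (A B : R) (w : ℕ → R) : Prop :=
  ∀ n, w (n + 2) = A * w (n + 1) - B * w n

namespace IsLucasSequence

variable {R : Type*} [CommRing R] {A B : R} {w w' : ℕ → R}

theorem const_mul (hw : IsLucasSequence A B w) (d : R) :
    IsLucasSequence A B (fun n => d * w n) := fun n => by
  simp only [hw n]; ring

theorem pow_mul (hw : IsLucasSequence A B w) (c : R) :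
    IsLucasSequence (c * A) (c ^ 2 * B) (fun n => c ^ n * w n) := fun n => by
  simp only [hw n]; ring

theorem odd (hw : IsLucasSequence A B w) :
    IsLucasSequence (A ^ 2 - 2 * B) (B ^ 2) (fun k => w (2 * k + 1)) := fun k => by
  have h₁ : w (2 * k + 3) = A * w (2 * k + 2) - B * w (2 * k + 1) := hw (2 * k + 1)
  have h₂ : w (2 * k + 4) = A * w (2 * k + 3) - B * w (2 * k + 2) := hw (2 * k + 2)
  have h₃ : w (2 * k + 5) = A * w (2 * k + 4) - B * w (2 * k + 3) := hw (2 * k + 3)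
  show w (2 * k + 5) = _ * w (2 * k + 3) - _ * w (2 * k + 1)
  linear_combination h₃ + A * h₂ + B * h₁

theorem ext (hw : IsLucasSequence A B w) (hw' : IsLucasSequence A B w')
    (h₀ : w 0 = w' 0) (h₁ : w 1 = w' 1) : w = w' := by
  funext n
  induction n using Nat.twoStepInduction with
  | zero => exact h₀
  | one => exact h₁
  | more n ih ih' => rw [hw n, hw' n, ih, ih']

end IsLucasSequence

theorem isLucasSequence_lucasU (A B : ℤ) : IsLucasSequence A B (lucasU A B) := fun _ => rfl

theorem isLucasSequence_lucasV (A B : ℤ) : IsLucasSequence A B (lucasV A B) := fun _ => rfl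

theorem lucasV_lucasU_identity (m : ℤ) (n : ℕ) :
    m ^ n * lucasV (m - 4) (4 - m) (2 * n + 1) =
      (m - 4) ^ (n + 1) * lucasU m m (2 * n + 1) := by
  have hV : IsLucasSequence (m * (m - 2) * (m - 4)) (m ^ 2 * (m - 4) ^ 2)
      (fun k => m ^ k * lucasV (m - 4) (4 - m) (2 * k + 1)) := by
    convert (isLucasSequence_lucasV (m - 4) (4 - m)).odd.pow_mul m using 1 <;> ring
  have hU : IsLucasSequence (m * (m - 2) * (m - 4)) (m ^ 2 * (m - 4) ^ 2)
      (fun k => (m - 4) * ((m - 4) ^ k * lucasU m m (2 * k + 1))) := by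
    convert ((isLucasSequence_lucasU m m).odd.pow_mul (m - 4)).const_mul (m - 4) using 1 <;> ring
  have h := hV.ext hU (by simp [lucasV, lucasU]) (by simp [lucasV, lucasU]; ring)
  linear_combination congrFun h n
end

section
/- Let p be an odd prime and let a be a positive integer. Then for every k with 0 ≤ k ≤ p^a − 1, one has C(2k, k) ≡ (−4)^k · C((p^a − 1)/2, k) (mod p). -/
/-!
Modulo `p`, `(n : ZMod p) = -1/2` whenever `p ∣ 2n + 1`, and the recursion
`(k + 1) * centralBinom (k + 1) = 2 (2k + 1) * centralBinom k` then gives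
`centralBinom k * k! = (-4)^k * n (n - 1) ⋯ (n - k + 1)`, i.e. the claim for a single digit
`k < p`. For general `k`, Lucas' theorem factors both sides over base-`p` digits: the digits of
`n = (p^a - 1)/2` below `p^a` are all `(p - 1)/2`, and `centralBinom` is multiplicative over digits
because a carry in `2 * (k % p)` kills both sides.
-/

open Nat Polynomial

theorem centralBinom_mul_factorial_eq_neg_four_pow_mul_descPochhammer {R : Type*} [CommRing R]
    {x : R} (hx : 2 * x = -1) (k : ℕ) :
    (centralBinom k * k ! : R) = (-4) ^ k * (descPochhammer R k).eval x := by
  induction k with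
  | zero => simp
  | succ k ih =>
    have hstep : ((k + 1) * centralBinom (k + 1) : R) = 2 * (2 * k + 1) * centralBinom k := by
      exact_mod_cast congrArg (Nat.cast : ℕ → R) (succ_mul_centralBinom_succ k)
    rw [factorial_succ, cast_mul, descPochhammer_succ_eval, cast_succ]
    linear_combination
      k ! * hstep + 2 * (2 * k + 1) * ih + 2 * (-4) ^ k * (descPochhammer R k).eval x * hx

namespace ZMod

variable {p : ℕ} [Fact p.Prime]

theorem pow_eq_pow_mod_mul_pow_div (x : ZMod p) (k : ℕ) : x ^ k = x ^ (k % p) * x ^ (k / p) := by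
  conv_lhs => rw [← mod_add_div k p, pow_add, pow_mul, pow_card]

theorem choose_eq_choose_mod_mul_choose_div (n k : ℕ) :
    (n.choose k : ZMod p) = (n % p).choose (k % p) * (n / p).choose (k / p) := by
  exact_mod_cast (intCast_eq_intCast_iff _ _ _).mpr Choose.choose_modEq_choose_mod_mul_choose_div

theorem centralBinom_eq_neg_four_pow_mul_choose_of_lt {n k : ℕ} (hn : p ∣ 2 * n + 1)
    (hk : k < p) :
    (centralBinom k : ZMod p) = (-4) ^ k * n.choose k := by
  have hx : 2 * (n : ZMod p) = -1 := by
    rw [eq_neg_iff_add_eq_zero]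
    exact_mod_cast (natCast_eq_zero_iff _ _).mpr hn
  have hfact : (k ! : ZMod p) ≠ 0 := by
    rw [Ne, natCast_eq_zero_iff, (Fact.out : p.Prime).dvd_factorial]
    omega
  apply mul_right_cancel₀ hfact
  rw [centralBinom_mul_factorial_eq_neg_four_pow_mul_descPochhammer hx,
    descPochhammer_eval_eq_descFactorial, descFactorial_eq_factorial_mul_choose]
  push_cast
  ring

theorem centralBinom_eq_centralBinom_mod_mul_centralBinom_div (k : ℕ) :
    (centralBinom k : ZMod p) = centralBinom (k % p) * centralBinom (k / p) := by
  have hp : p.Prime := Fact.out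
  have hlucas := centralBinom_eq_two_mul_choose k ▸
    choose_eq_choose_mod_mul_choose_div (p := p) (2 * k) k
  have hmod := mod_lt k hp.pos
  have hk := mod_add_div k p
  rcases lt_or_ge (2 * (k % p)) p with hsmall | hcarry
  · have h2k : 2 * k = 2 * (k % p) + p * (2 * (k / p)) := by rw [mul_left_comm]; omega
    rw [hlucas, h2k, add_mul_mod_self_left, add_mul_div_left _ _ hp.pos, mod_eq_of_lt hsmall,
      div_eq_of_lt hsmall, zero_add, centralBinom_eq_two_mul_choose, centralBinom_eq_two_mul_choose]
  · have h2k : 2 * k = (2 * (k % p) - p) + p * (2 * (k / p) + 1) := by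
      rw [Nat.mul_add, mul_left_comm]; omega
    have hdvd : p ∣ centralBinom (k % p) := by
      rw [centralBinom_eq_two_mul_choose, two_mul]
      exact hp.dvd_choose_add hmod hmod (by omega)
    rw [hlucas, h2k, add_mul_mod_self_left, mod_eq_of_lt (by omega),
      choose_eq_zero_of_lt (by omega), (natCast_eq_zero_iff _ _).mpr hdvd]
    simp

theorem centralBinom_eq_neg_four_pow_mul_choose {a n k : ℕ} (hn : p ^ a ∣ 2 * n + 1)
    (hk : k < p ^ a) :
    (centralBinom k : ZMod p) = (-4) ^ k * n.choose k := by
  induction a generalizing n k with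
  | zero =>
    obtain rfl : k = 0 := by simpa using hk
    simp
  | succ a ih =>
    have hp : p.Prime := Fact.out
    have h2n : 2 * n + 1 = p * (2 * (n / p)) + (2 * (n % p) + 1) := by
      have := mod_add_div n p
      rw [mul_left_comm]; omega
    have hdigit : 2 * (n % p) + 1 = p := by
      have hn_dvd : p ∣ 2 * (n % p) + 1 := by
        rw [← Nat.dvd_add_right (dvd_mul_right p _), ← h2n]
        exact dvd_of_pow_dvd le_add_self hn
      exact eq_of_dvd_of_lt_two_mul (succ_ne_zero _) hn_dvd (by have := mod_lt n hp.pos; omega)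
    have hn' : p ^ a ∣ 2 * (n / p) + 1 := by
      rw [h2n, hdigit, ← Nat.mul_add_one, _root_.pow_succ'] at hn
      exact Nat.dvd_of_mul_dvd_mul_left hp.pos hn
    have hk' : k / p < p ^ a := by
      rw [div_lt_iff_lt_mul hp.pos, ← pow_succ]; exact hk
    rw [centralBinom_eq_centralBinom_mod_mul_centralBinom_div,
      centralBinom_eq_neg_four_pow_mul_choose_of_lt hdigit.symm.dvd (mod_lt k hp.pos), ih hn' hk',
      choose_eq_choose_mod_mul_choose_div n k, pow_eq_pow_mod_mul_pow_div (-4) k]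
    ring

end ZMod

theorem central_binom_congr_neg_four_pow_general (p : ℕ) (hp : p.Prime) (hp2 : Odd p)
    (a : ℕ) :
    ∀ k : ℕ, k ≤ p ^ a - 1 →
      ((2 * k).choose k : ℤ) ≡ (-4) ^ k * (((p ^ a - 1) / 2).choose k : ℤ) [ZMOD (p : ℤ)] := by
  intro k hk
  have : Fact p.Prime := ⟨hp⟩
  have hpa : 0 < p ^ a := pow_pos hp.pos a
  have hn : 2 * ((p ^ a - 1) / 2) + 1 = p ^ a := by
    have := Nat.odd_iff.mp (hp2.pow (n := a))
    omega
  rw [← ZMod.intCast_eq_intCast_iff]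
  push_cast
  rw [← centralBinom_eq_two_mul_choose]
  exact ZMod.centralBinom_eq_neg_four_pow_mul_choose (a := a) hn.symm.dvd (by omega)

theorem central_binom_congr_neg_four_pow (p : ℕ) (hp : p.Prime) (hp2 : Odd p)
    (a : ℕ) (ha : 0 < a) :
    ∀ k : ℕ, k ≤ p ^ a - 1 →
      ((2 * k).choose k : ℤ) ≡ (-4) ^ k * (((p ^ a - 1) / 2).choose k : ℤ) [ZMOD (p : ℤ)] :=
  central_binom_congr_neg_four_pow_general p hp hp2 a
end
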